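/- arXiv:1711.07074 — 7 statements merged into one kernel-verified Lean document; each statement's English description precedes it below -/
import Mathlib

section
/- The kernel of the incidence matrix C_G of a finite directed graph G contains a strictly positive vector if and only if every connected component of G is strongly connected (i.e. G is weakly reversible). -/
/-!
Both conditions are equivalent to every edge `e` lying on a directed cycle, i.e. to `src e` being
reachable from `tgt e`. If `C v = 0` with `v > 0`, let `S` be the set of nodes reachable from
`tgt e`. No edge leaves `S`, so summing the rows of `C v` over `S` expresses the zero net inflow
into `S` as a sum of nonnegative terms, among them `v e` unless `src e ∈ S`. Conversely, the
indicator vector of a directed cycle lies in the kernel, and the sum over all edges of cycles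
through them is strictly positive.
-/

open Finset Matrix Relation

variable {V E K : Type*}

def incidenceMatrix [DecidableEq V] [Ring K] (src tgt : E → V) : Matrix V E K :=
  fun i e => (if tgt e = i then 1 else 0) - (if src e = i then 1 else 0)

def IsEdge (src tgt : E → V) (a b : V) : Prop :=
  ∃ e, src e = a ∧ tgt e = b

section Ring

variable [DecidableEq V] [Fintype E] [Ring K] (src tgt : E → V)

theorem incidenceMatrix_mulVec_single_one [DecidableEq E] (e : E) :
    incidenceMatrix (K := K) src tgt *ᵥ Pi.single e 1 =
      Pi.single (tgt e) 1 - Pi.single (src e) 1 := by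
  ext i
  simp [incidenceMatrix, Pi.single_apply, eq_comm]

theorem sum_incidenceMatrix_mulVec (S : Finset V) (v : E → K) :
    ∑ i ∈ S, (incidenceMatrix src tgt *ᵥ v) i =
      ∑ e, ((if tgt e ∈ S then 1 else 0) - (if src e ∈ S then 1 else 0)) * v e := by
  simp only [mulVec, dotProduct, incidenceMatrix]
  rw [sum_comm]
  refine sum_congr rfl fun e _ => ?_
  rw [← sum_mul, sum_sub_distrib, sum_ite_eq, sum_ite_eq]

end Ring

section OrderedRing

variable [DecidableEq V] [Fintype E] [Ring K] [PartialOrder K] [IsStrictOrderedRing K]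
  {src tgt : E → V}

theorem src_mem_of_tgt_mem_of_mulVec_eq_zero {v : E → K} (hv : ∀ e, 0 < v e)
    (hker : incidenceMatrix src tgt *ᵥ v = 0) {S : Finset V}
    (hS : ∀ e, src e ∈ S → tgt e ∈ S) {e : E} (he : tgt e ∈ S) : src e ∈ S := by
  by_contra he'
  have hterm_nonneg : ∀ f ∈ (univ : Finset E),
      0 ≤ ((if tgt f ∈ S then (1 : K) else 0) - (if src f ∈ S then 1 else 0)) * v f := by
    intro f _
    by_cases hs : src f ∈ S
    · simp [hs, hS f hs]
    · by_cases ht : tgt f ∈ S <;> simp [hs, ht, (hv f).le]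
  have hflux := sum_incidenceMatrix_mulVec src tgt S v
  rw [hker, Pi.zero_def, sum_const_zero, eq_comm, sum_eq_zero_iff_of_nonneg hterm_nonneg] at hflux
  simpa [he, he', (hv e).ne'] using hflux e (mem_univ e)

theorem reflTransGen_tgt_src_of_mulVec_eq_zero [Fintype V] {v : E → K} (hv : ∀ e, 0 < v e)
    (hker : incidenceMatrix src tgt *ᵥ v = 0) (e : E) :
    ReflTransGen (IsEdge src tgt) (tgt e) (src e) := by
  classical
  let S := univ.filter (ReflTransGen (IsEdge src tgt) (tgt e))
  have hS : ∀ f, src f ∈ S → tgt f ∈ S := fun f hf => by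
    simp only [S, mem_filter, mem_univ, true_and] at hf ⊢
    exact hf.tail ⟨f, rfl, rfl⟩
  have htgt : tgt e ∈ S := by simpa [S] using ReflTransGen.refl
  simpa [S] using src_mem_of_tgt_mem_of_mulVec_eq_zero hv hker hS htgt

theorem exists_nonneg_mulVec_eq_of_reflTransGen [DecidableEq E] {a b : V}
    (hab : ReflTransGen (IsEdge src tgt) a b) :
    ∃ w : E → K, 0 ≤ w ∧ incidenceMatrix src tgt *ᵥ w = Pi.single b 1 - Pi.single a 1 := by
  induction hab with
  | refl => exact ⟨0, le_rfl, by simp⟩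
  | tail _ hcd ih =>
    obtain ⟨w, hw, hCw⟩ := ih
    obtain ⟨e, rfl, rfl⟩ := hcd
    refine ⟨w + Pi.single e 1, add_nonneg hw (Pi.single_nonneg.2 zero_le_one), ?_⟩
    rw [mulVec_add, hCw, incidenceMatrix_mulVec_single_one]
    abel

theorem exists_pos_mulVec_eq_zero_of_reflTransGen
    (hrev : ∀ e, ReflTransGen (IsEdge src tgt) (tgt e) (src e)) :
    ∃ v : E → K, (∀ e, 0 < v e) ∧ incidenceMatrix src tgt *ᵥ v = 0 := by
  classical
  have hcycle : ∀ e, ∃ u : E → K, 0 ≤ u ∧ 1 ≤ u e ∧ incidenceMatrix src tgt *ᵥ u = 0 := by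
    intro e
    obtain ⟨w, hw, hCw⟩ := exists_nonneg_mulVec_eq_of_reflTransGen (K := K) (hrev e)
    refine ⟨w + Pi.single e 1, add_nonneg hw (Pi.single_nonneg.2 zero_le_one), ?_, ?_⟩
    · simpa using hw e
    · rw [mulVec_add, hCw, incidenceMatrix_mulVec_single_one]
      abel
  choose u hu hue hCu using hcycle
  refine ⟨∑ e, u e, fun f => ?_, by simp [mulVec_sum, hCu]⟩
  calc (0 : K) < 1 := zero_lt_one
    _ ≤ u f f := hue f
    _ ≤ ∑ e, u e f := single_le_sum (fun e _ => hu e f) (mem_univ f)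
    _ = (∑ e, u e) f := (Finset.sum_apply f _ _).symm

theorem exists_pos_mulVec_eq_zero_iff [Fintype V] :
    (∃ v : E → K, (∀ e, 0 < v e) ∧ incidenceMatrix src tgt *ᵥ v = 0) ↔
      ∀ e, ReflTransGen (IsEdge src tgt) (tgt e) (src e) :=
  ⟨fun ⟨_, hv, hker⟩ => reflTransGen_tgt_src_of_mulVec_eq_zero hv hker,
    exists_pos_mulVec_eq_zero_of_reflTransGen⟩

end OrderedRing

theorem Relation.equivalence_reflTransGen_of_reverse {α : Type*} {r : α → α → Prop}
    (hrev : ∀ a b, r a b → ReflTransGen r b a) : Equivalence (ReflTransGen r) where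
  refl _ := .refl
  symm h := by
    induction h with
    | refl => exact .refl
    | tail _ hbc ih => exact (hrev _ _ hbc).trans ih
  trans := .trans

theorem forall_reflTransGen_tgt_src_iff {src tgt : E → V} :
    (∀ e, ReflTransGen (IsEdge src tgt) (tgt e) (src e)) ↔
      ∀ i k, EqvGen (fun i k => ∃ e, (src e = i ∧ tgt e = k) ∨ (src e = k ∧ tgt e = i)) i k →
        ReflTransGen (IsEdge src tgt) i k := by
  constructor
  · intro hrev i k hik
    have hequiv := equivalence_reflTransGen_of_reverse (r := IsEdge src tgt)
      fun _ _ ⟨e, hs, ht⟩ => hs ▸ ht ▸ hrev e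
    refine hequiv.eqvGen_iff.mp (EqvGen.mono ?_ i k hik)
    rintro _ _ ⟨e, ⟨rfl, rfl⟩ | ⟨rfl, rfl⟩⟩
    · exact .single ⟨e, rfl, rfl⟩
    · exact hrev e
  · exact fun h e => h _ _ (.symm _ _ (.rel _ _ ⟨e, .inl ⟨rfl, rfl⟩⟩))

open scoped Classical

theorem pos_kernel_incidence_iff_weakly_reversible_general
    (m p : ℕ) (src tgt : Fin p → Fin m) :
    (∃ v : Fin p → ℝ, (∀ e, 0 < v e) ∧
        Matrix.mulVec
          (fun (i : Fin m) (e : Fin p) =>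
            (if tgt e = i then (1 : ℝ) else 0) - (if src e = i then (1 : ℝ) else 0))
          v = 0) ↔
      (∀ i k : Fin m,
        Relation.EqvGen
          (fun i k => ∃ e, (src e = i ∧ tgt e = k) ∨ (src e = k ∧ tgt e = i)) i k →
        Relation.ReflTransGen (fun i k => ∃ e, src e = i ∧ tgt e = k) i k) :=
  exists_pos_mulVec_eq_zero_iff.trans forall_reflTransGen_tgt_src_iff

/-- for a finite directed graph (nodes `Fin m`, edges `Fin p` given by
source/target maps, no self-loops), the kernel of the incidence matrix contains a strictly
positive vector if and only if every connected component is strongly connected. -/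
theorem pos_kernel_incidence_iff_weakly_reversible
    (m p : ℕ) (src tgt : Fin p → Fin m) (hloop : ∀ e, src e ≠ tgt e) :
    (∃ v : Fin p → ℝ, (∀ e, 0 < v e) ∧
        Matrix.mulVec
          (fun (i : Fin m) (e : Fin p) =>
            (if tgt e = i then (1 : ℝ) else 0) - (if src e = i then (1 : ℝ) else 0))
          v = 0) ↔
      (∀ i k : Fin m,
        Relation.EqvGen
          (fun i k => ∃ e, (src e = i ∧ tgt e = k) ∨ (src e = k ∧ tgt e = i)) i k →
        Relation.ReflTransGen (fun i k => ∃ e, src e = i ∧ tgt e = k) i k) :=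
  pos_kernel_incidence_iff_weakly_reversible_general m p src tgt
end

section
/- If G' ⪯ G are two reaction graphs associated with the same reaction network, then δ_{G'} ≤ δ_G. -/
/-!
Write `V_G = (Fin m_G → ℝ)` and `C_G ≤ V_G` for the functions constant on connected components,
so that `m_G - ℓ_G = dim (V_G ⧸ C_G)`. A label-preserving morphism `G → G'` maps edges injectively
(edges are determined by their labelled endpoints), hence bijectively, onto edges; so the two
stoichiometric matrices differ by a column permutation, and a function on the nodes of `G'` is
constant on components iff its pullback to `G` is. Pullback thus embeds `V_{G'} ⧸ C_{G'}` into
`V_G ⧸ C_G`, which gives `m_{G'} - ℓ_{G'} ≤ m_G - ℓ_G`.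
-/

open scoped Classical

/-- A reaction graph associated with a reaction network with `n` species and `p` reactions:
nodes labeled by complexes, edges in bijection with reactions (edges are indexed by `Fin p`). -/
structure ReactionGraph (n p : ℕ) where
  m : ℕ
  src : Fin p → Fin m
  tgt : Fin p → Fin m
  Y : Fin m → Fin n → ℕ
  noIsolated : ∀ i : Fin m, ∃ e : Fin p, src e = i ∨ tgt e = i
  noSelf : ∀ e : Fin p, Y (src e) ≠ Y (tgt e)
  edgeLabelInj : ∀ e e' : Fin p, Y (src e) = Y (src e') → Y (tgt e) = Y (tgt e') → e = e'

namespace ReactionGraph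

variable {n p : ℕ}

/-- Incidence matrix. -/
noncomputable def inc (G : ReactionGraph n p) : Matrix (Fin G.m) (Fin p) ℝ :=
  fun i e => (if G.tgt e = i then (1 : ℝ) else 0) - (if G.src e = i then (1 : ℝ) else 0)

/-- Labeling matrix. -/
noncomputable def lab (G : ReactionGraph n p) : Matrix (Fin n) (Fin G.m) ℝ :=
  fun i k => (G.Y k i : ℝ)

/-- Stoichiometric matrix of the underlying network. -/
noncomputable def stoich (G : ReactionGraph n p) : Matrix (Fin n) (Fin p) ℝ :=
  fun i e => (G.Y (G.tgt e) i : ℝ) - (G.Y (G.src e) i : ℝ)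

/-- Undirected adjacency. -/
def Adj (G : ReactionGraph n p) (i k : Fin G.m) : Prop :=
  ∃ e : Fin p, (G.src e = i ∧ G.tgt e = k) ∨ (G.src e = k ∧ G.tgt e = i)

/-- Connectivity: same connected component. -/
def Conn (G : ReactionGraph n p) : Fin G.m → Fin G.m → Prop :=
  Relation.EqvGen G.Adj

/-- Directed reachability. -/
def Reach (G : ReactionGraph n p) : Fin G.m → Fin G.m → Prop :=
  Relation.ReflTransGen (fun i k => ∃ e : Fin p, G.src e = i ∧ G.tgt e = k)

/-- Every connected component is strongly connected. -/
def WeaklyReversible (G : ReactionGraph n p) : Prop :=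
  ∀ i k, G.Conn i k → G.Reach i k

noncomputable def connSetoid (G : ReactionGraph n p) : Setoid (Fin G.m) :=
  ⟨G.Conn, Relation.EqvGen.is_equivalence _⟩

/-- Number of connected components. -/
noncomputable def numComponents (G : ReactionGraph n p) : ℕ :=
  Nat.card (Quotient G.connSetoid)

/-- Deficiency `m_G - ℓ_G - s`. -/
noncomputable def deficiency (G : ReactionGraph n p) : ℤ :=
  (G.m : ℤ) - G.numComponents - G.stoich.rank

/-- Morphism of reaction graphs: maps edges to edges and preserves labels. -/
structure Morphism (G G' : ReactionGraph n p) where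
  toFun : Fin G.m → Fin G'.m
  map_edge : ∀ e : Fin p, ∃ e' : Fin p,
    G'.src e' = toFun (G.src e) ∧ G'.tgt e' = toFun (G.tgt e)
  map_label : ∀ i, G'.Y (toFun i) = G.Y i

/-- Mass-action monomial `x^y`. -/
noncomputable def monomial (x : Fin n → ℝ) (y : Fin n → ℕ) : ℝ := ∏ i, x i ^ y i

/-- Mass-action kinetics rate vector determined by rate constants `κ`. -/
noncomputable def massAction (G : ReactionGraph n p) (κ : Fin p → ℝ) (x : Fin n → ℝ) :
    Fin p → ℝ :=
  fun e => κ e * monomial x (G.Y (G.src e))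

/-- Positive vector. -/
def Pos {n : ℕ} (x : Fin n → ℝ) : Prop := ∀ i, 0 < x i

/-- `t` is a spanning tree of the connected component of `i`, rooted at `i`:
every other node of the component has exactly one outgoing edge, and iterating
edges strictly decreases a depth function (no cycles). -/
def IsSpanningTree (G : ReactionGraph n p) (i : Fin G.m) (t : Fin G.m → Option (Fin p)) :
    Prop :=
  t i = none ∧
  (∀ k, k ≠ i → G.Conn i k → ∃ e, t k = some e) ∧
  (∀ k e, t k = some e → G.src e = k ∧ G.Conn i k ∧ k ≠ i) ∧
  ∃ d : Fin G.m → ℕ, ∀ k e, t k = some e → d (G.tgt e) < d k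

/-- Tree constant `K_{G,i}`: sum over spanning trees rooted at `i` of the products of rate
constants of the tree's edges. -/
noncomputable def K (G : ReactionGraph n p) (κ : Fin p → ℝ) (i : Fin G.m) : ℝ :=
  ∑ t : {t : Fin G.m → Option (Fin p) // G.IsSpanningTree i t},
    ∏ k : Fin G.m, (t.val k).elim 1 κ

/-- The matrix of the linear map `Ψ_G` (labeling map together with componentwise sums). -/
noncomputable def psiMat (G : ReactionGraph n p) : Matrix (Fin n ⊕ Fin G.m) (Fin G.m) ℝ :=
  fun r k => match r with
    | Sum.inl i => (G.Y k i : ℝ)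
    | Sum.inr i₀ => if G.Conn i₀ k then 1 else 0

noncomputable def kerPsi (G : ReactionGraph n p) : Submodule ℝ (Fin G.m → ℝ) :=
  LinearMap.ker G.psiMat.mulVecLin

end ReactionGraph

open Module

theorem Relation.EqvGen.apply_eq_of_rel {α β : Type*} {r : α → α → Prop} {g : α → β}
    (h : ∀ a b, r a b → g a = g b) {a b : α} (hab : Relation.EqvGen r a b) : g a = g b :=
  congrArg (Quot.lift g h) (Quot.eqvGen_sound hab)

theorem Submodule.finrank_quotient_le_of_eq_comap {K V W : Type*} [DivisionRing K]
    [AddCommGroup V] [Module K V] [AddCommGroup W] [Module K W] [FiniteDimensional K W]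
    {p : Submodule K V} {q : Submodule K W} (g : V →ₗ[K] W) (h : p = q.comap g) :
    finrank K (V ⧸ p) ≤ finrank K (W ⧸ q) :=
  LinearMap.finrank_le_finrank_of_injective (f := p.mapQ q g h.le) <| by
    rw [← LinearMap.ker_eq_bot, Submodule.ker_mapQ, ← h, Submodule.mkQ_map_self]

namespace ReactionGraph

variable {n p : ℕ}

noncomputable def componentwiseConst (G : ReactionGraph n p) : Submodule ℝ (Fin G.m → ℝ) :=
  LinearMap.range (LinearMap.funLeft ℝ ℝ (Quotient.mk G.connSetoid))

theorem finrank_componentwiseConst (G : ReactionGraph n p) :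
    finrank ℝ G.componentwiseConst = G.numComponents := by
  rw [componentwiseConst, LinearMap.finrank_range_of_inj
    (LinearMap.funLeft_injective_of_surjective _ _ _ Quotient.mk_surjective),
    Module.finrank_fintype_fun_eq_card, numComponents, Nat.card_eq_fintype_card]

theorem mem_componentwiseConst_iff (G : ReactionGraph n p) (x : Fin G.m → ℝ) :
    x ∈ G.componentwiseConst ↔ ∀ e, x (G.src e) = x (G.tgt e) := by
  constructor
  · rintro ⟨y, rfl⟩ e
    exact congrArg y (Quotient.sound (Relation.EqvGen.rel _ _ ⟨e, Or.inl ⟨rfl, rfl⟩⟩))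
  · intro h
    have hAdj : ∀ i k, G.Adj i k → x i = x k := by
      rintro i k ⟨e, ⟨rfl, rfl⟩ | ⟨rfl, rfl⟩⟩
      exacts [h e, (h e).symm]
    exact ⟨Quotient.lift x fun _ _ => Relation.EqvGen.apply_eq_of_rel hAdj, rfl⟩

theorem deficiency_eq_finrank_quotient_sub_rank (G : ReactionGraph n p) :
    G.deficiency = finrank ℝ ((Fin G.m → ℝ) ⧸ G.componentwiseConst) - G.stoich.rank := by
  have h := G.componentwiseConst.finrank_quotient_add_finrank
  rw [Module.finrank_fin_fun, finrank_componentwiseConst] at h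
  rw [deficiency]
  omega

namespace Morphism

variable {G G' : ReactionGraph n p} (f : Morphism G G')

noncomputable def edgeMap (e : Fin p) : Fin p := (f.map_edge e).choose

theorem src_edgeMap (e : Fin p) : G'.src (f.edgeMap e) = f.toFun (G.src e) :=
  (f.map_edge e).choose_spec.1

theorem tgt_edgeMap (e : Fin p) : G'.tgt (f.edgeMap e) = f.toFun (G.tgt e) :=
  (f.map_edge e).choose_spec.2

theorem edgeMap_injective : Function.Injective f.edgeMap := by
  intro e₁ e₂ h
  apply G.edgeLabelInj
  · rw [← f.map_label, ← f.map_label, ← src_edgeMap, ← src_edgeMap, h]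
  · rw [← f.map_label, ← f.map_label, ← tgt_edgeMap, ← tgt_edgeMap, h]

noncomputable def edgeEquiv : Fin p ≃ Fin p :=
  Equiv.ofBijective f.edgeMap (Finite.injective_iff_bijective.mp f.edgeMap_injective)

theorem stoich_eq_submatrix : G.stoich = G'.stoich.submatrix id f.edgeEquiv := by
  ext i e
  simp only [stoich, Matrix.submatrix_apply, id, edgeEquiv, Equiv.ofBijective_apply,
    src_edgeMap, tgt_edgeMap, map_label]

theorem rank_stoich_eq (f : Morphism G G') : G'.stoich.rank = G.stoich.rank := by
  rw [f.stoich_eq_submatrix, ← Matrix.rank_submatrix G'.stoich (Equiv.refl _) f.edgeEquiv]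
  rfl

theorem componentwiseConst_eq_comap :
    G'.componentwiseConst = G.componentwiseConst.comap (LinearMap.funLeft ℝ ℝ f.toFun) := by
  ext x
  rw [Submodule.mem_comap, mem_componentwiseConst_iff, mem_componentwiseConst_iff,
    ← f.edgeEquiv.forall_congr_right]
  simp only [LinearMap.funLeft_apply, edgeEquiv, Equiv.ofBijective_apply,
    src_edgeMap, tgt_edgeMap]

end Morphism

end ReactionGraph

/-- if `G' ⪯ G` then `δ_{G'} ≤ δ_G`. -/
theorem deficiency_mono {n p : ℕ} (G G' : ReactionGraph n p)
    (f : ReactionGraph.Morphism G G') : G'.deficiency ≤ G.deficiency := by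
  have hquot := Submodule.finrank_quotient_le_of_eq_comap _ f.componentwiseConst_eq_comap
  rw [G.deficiency_eq_finrank_quotient_sub_rank, G'.deficiency_eq_finrank_quotient_sub_rank,
    f.rank_stoich_eq]
  omega
end

section
/- Both the union and the intersection of two admissible partitions of the node set of the canonical split reaction graph are admissible. Consequently, the set of equivalence classes of reaction graphs of a reaction network, ordered by reverse refinement of the corresponding admissible partitions, is a finite lattice with the split class as maximal element and the complex class as minimal element. -/
open scoped Classical

/-- An equivalence relation (partition) on the node set `Fin (2*p)` of the canonical split
reaction graph is admissible if related nodes carry equal labels. -/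
def AdmissibleSetoid {q n : ℕ} (L : Fin q → Fin n → ℕ) (s : Setoid (Fin q)) : Prop :=
  ∀ a b, s.r a b → L a = L b

/-- The labeling of the canonical split reaction graph: node `2j` gets the source complex
and node `2j+1` the target complex of the `j`-th reaction. -/
def splitLabel {n p : ℕ} (rsrc rtgt : Fin p → Fin n → ℕ) : Fin (2 * p) → Fin n → ℕ :=
  fun k => if k.val % 2 = 0 then rsrc ⟨k.val / 2, by omega⟩ else rtgt ⟨k.val / 2, by omega⟩

/-! Admissible partitions are exactly those below the kernel of the labeling, i.e. the
lower set `Set.Iic (Setoid.ker L)` of the finite complete lattice of partitions; such a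
lower set is closed under `⊔` and `⊓` and contains `⊥`. -/

instance Setoid.instFinite {α : Type*} [Finite α] : Finite (Setoid α) :=
  Finite.of_injective (fun r : Setoid α => ⇑r) fun _ _ h => Setoid.eq_iff_rel_eq.2 h

section

variable {q n : ℕ} {L : Fin q → Fin n → ℕ} {s s' : Setoid (Fin q)}

theorem admissibleSetoid_iff_le_ker : AdmissibleSetoid L s ↔ s ≤ Setoid.ker L :=
  Iff.rfl

theorem AdmissibleSetoid.sup (hs : AdmissibleSetoid L s) (hs' : AdmissibleSetoid L s') :
    AdmissibleSetoid L (s ⊔ s') :=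
  admissibleSetoid_iff_le_ker.2 (sup_le hs hs')

theorem AdmissibleSetoid.inf (hs : AdmissibleSetoid L s) : AdmissibleSetoid L (s ⊓ s') :=
  admissibleSetoid_iff_le_ker.2 (inf_le_left.trans hs)

theorem admissibleSetoid_ker : AdmissibleSetoid L (Setoid.ker L) :=
  admissibleSetoid_iff_le_ker.2 le_rfl

theorem admissibleSetoid_bot : AdmissibleSetoid L ⊥ :=
  admissibleSetoid_iff_le_ker.2 bot_le

end

/-- unions and intersections of admissible partitions are admissible;
consequently the admissible partitions (equivalently, equivalence classes of reaction
graphs, ordered by reverse refinement) form a finite lattice whose minimal admissible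
partition is the discrete one (the split class, maximal as a reaction graph) and whose
maximal admissible partition is `Setoid.ker L` (the complex class, minimal as a reaction
graph). -/
theorem admissible_lattice {n p : ℕ} (rsrc rtgt : Fin p → Fin n → ℕ) :
    (∀ s s' : Setoid (Fin (2 * p)),
        AdmissibleSetoid (splitLabel rsrc rtgt) s →
        AdmissibleSetoid (splitLabel rsrc rtgt) s' →
        AdmissibleSetoid (splitLabel rsrc rtgt) (s ⊔ s') ∧
          AdmissibleSetoid (splitLabel rsrc rtgt) (s ⊓ s')) ∧
      AdmissibleSetoid (splitLabel rsrc rtgt) ⊥ ∧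
      AdmissibleSetoid (splitLabel rsrc rtgt) (Setoid.ker (splitLabel rsrc rtgt)) ∧
      (∀ s : Setoid (Fin (2 * p)), AdmissibleSetoid (splitLabel rsrc rtgt) s →
        ⊥ ≤ s ∧ s ≤ Setoid.ker (splitLabel rsrc rtgt)) ∧
      Finite {s : Setoid (Fin (2 * p)) // AdmissibleSetoid (splitLabel rsrc rtgt) s} :=
  ⟨fun _ _ hs hs' => ⟨hs.sup hs', hs.inf⟩, admissibleSetoid_bot, admissibleSetoid_ker,
    fun _ hs => ⟨bot_le, admissibleSetoid_iff_le_ker.1 hs⟩, inferInstance⟩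
end

section
/- If there exists a positive node balanced steady state with respect to a reaction graph G (i.e. some x ∈ ℝ^n_{>0} with C_G v(x) = 0, where v is a kinetics taking positive values on positive states), then G is weakly reversible. -/
open scoped Classical

/-! A nonnegative flux `w` with `C_G w = 0` is conserved at every node. Summing the balance
over a set `S` of nodes that no edge leaves, the flux entering `S` has to vanish. Applied to
the set of nodes reachable from the target of an edge `e` with a positive flux, this shows that
`e` cannot enter that set from outside, i.e. its source is reachable from its target. So every
edge can be reversed along a directed path, directed reachability is symmetric, and it
therefore contains connectivity. -/

namespace ReactionGraph

variable {n p : ℕ} (G : ReactionGraph n p)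

theorem sum_inc_mulVec (w : Fin p → ℝ) (S : Finset (Fin G.m)) :
    ∑ i ∈ S, G.inc.mulVec w i =
      ∑ f, ((if G.tgt f ∈ S then 1 else 0) - (if G.src f ∈ S then 1 else 0)) * w f := by
  simp only [Matrix.mulVec, dotProduct, inc]
  rw [Finset.sum_comm]
  refine Finset.sum_congr rfl fun f _ => ?_
  simp [sub_mul, ite_mul, Finset.sum_sub_distrib, Finset.sum_ite_eq]

theorem flux_eq_zero_of_tgt_mem_of_src_notMem {w : Fin p → ℝ} (hw : 0 ≤ w)
    (hC : G.inc.mulVec w = 0) {S : Finset (Fin G.m)}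
    (hS : ∀ f, G.src f ∈ S → G.tgt f ∈ S) {e : Fin p}
    (htgt : G.tgt e ∈ S) (hsrc : G.src e ∉ S) : w e = 0 := by
  have hterm_nonneg : ∀ f ∈ Finset.univ,
      0 ≤ ((if G.tgt f ∈ S then (1 : ℝ) else 0) - (if G.src f ∈ S then 1 else 0)) * w f := by
    intro f _
    refine mul_nonneg ?_ (hw f)
    by_cases hf : G.src f ∈ S
    · simp [hf, hS f hf]
    · split_ifs <;> norm_num
  have hsum := G.sum_inc_mulVec w S
  rw [hC] at hsum
  simp only [Pi.zero_apply, Finset.sum_const_zero] at hsum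
  have he := (Finset.sum_eq_zero_iff_of_nonneg hterm_nonneg).mp hsum.symm e (Finset.mem_univ e)
  simpa [htgt, hsrc] using he

theorem reach_tgt_src {w : Fin p → ℝ} (hw : ∀ f, 0 < w f) (hC : G.inc.mulVec w = 0)
    (e : Fin p) : G.Reach (G.tgt e) (G.src e) := by
  let S : Finset (Fin G.m) := {k | G.Reach (G.tgt e) k}
  have hS : ∀ f, G.src f ∈ S → G.tgt f ∈ S := fun f hf =>
    Finset.mem_filter.mpr ⟨Finset.mem_univ _, (Finset.mem_filter.mp hf).2.tail ⟨f, rfl, rfl⟩⟩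
  by_contra hsrc
  refine (hw e).ne' (G.flux_eq_zero_of_tgt_mem_of_src_notMem (fun f => (hw f).le) hC hS ?_ ?_)
  · exact Finset.mem_filter.mpr ⟨Finset.mem_univ _, .refl⟩
  · simpa [S] using hsrc

theorem reach_symm_of_reach_tgt_src (h : ∀ e, G.Reach (G.tgt e) (G.src e)) {i k : Fin G.m}
    (hik : G.Reach i k) : G.Reach k i := by
  induction hik with
  | refl => exact .refl
  | tail _ hedge ih =>
    obtain ⟨e, rfl, rfl⟩ := hedge
    exact (h e).trans ih

theorem reach_equivalence_of_reach_tgt_src (h : ∀ e, G.Reach (G.tgt e) (G.src e)) :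
    Equivalence G.Reach :=
  ⟨fun _ => .refl, G.reach_symm_of_reach_tgt_src h, .trans⟩

theorem adj_le_reach_of_reach_tgt_src (h : ∀ e, G.Reach (G.tgt e) (G.src e)) :
    G.Adj ≤ G.Reach := by
  rintro i k ⟨e, ⟨rfl, rfl⟩ | ⟨rfl, rfl⟩⟩
  · exact .single ⟨e, rfl, rfl⟩
  · exact h e

theorem weaklyReversible_of_reach_tgt_src (h : ∀ e, G.Reach (G.tgt e) (G.src e)) :
    G.WeaklyReversible := fun _ _ hconn =>
  (G.reach_equivalence_of_reach_tgt_src h).eqvGen_iff.mp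
    (Relation.EqvGen.mono (G.adj_le_reach_of_reach_tgt_src h) _ _ hconn)

end ReactionGraph

/-- if a kinetics (positive on positive states) admits a positive node
balanced steady state w.r.t. `G`, then `G` is weakly reversible. -/
theorem weaklyReversible_of_pos_node_balanced {n p : ℕ} (G : ReactionGraph n p)
    (v : (Fin n → ℝ) → Fin p → ℝ)
    (hv : ∀ x, ReactionGraph.Pos x → ∀ e, 0 < v x e)
    (x : Fin n → ℝ) (hx : ReactionGraph.Pos x)
    (hnb : G.inc.mulVec (v x) = 0) :
    G.WeaklyReversible :=
  G.weaklyReversible_of_reach_tgt_src (G.reach_tgt_src (hv x hx) hnb)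
end

section
/- Existence criterion for node balanced steady states: Let G be a weakly reversible reaction graph for a mass-action network with rate constants κ, and let u_1,…,u_{δ_G} be a basis of ker Ψ_G. Then there exists a positive node balanced steady state with respect to G if and only if (K_G)^{u_i} := ∏_j K_{G,j}^{u_{ij}} = 1 for all i = 1,…,δ_G. -/
open scoped Classical

/-!
By Kirchhoff's matrix-tree theorem the tree constants `K_{G,j}` are node balanced: both sides of
the balance at a node `i` are weighted counts of the spanning subgraphs of the component of `i`
in which every node has one outgoing edge and the unique cycle passes through `i` (add an edge
`e` to a spanning tree rooted at `src e`). Under weak reversibility `K_G` is positive, and a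
maximum principle shows that every positive node balanced vector is a multiple of `K_G` on each
component. So a positive `x` is a node balanced steady state iff `log x^{y_j} - log K_{G,j}` is
constant on components, and such an `x` exists iff `log K_G` lies in the range of `Ψ_Gᵀ`, the
orthogonal complement of `ker Ψ_G`; on a basis of `ker Ψ_G` this is the product condition.
-/

open Finset Matrix

namespace Function

theorem eq_iterate_minimalPeriod_pred {α : Type*} {g : α → α} {x y : α} {s : ℕ}
    (hs : g^[s] x = y) (hy : g y = x) : y = g^[minimalPeriod g x - 1] x := by
  have hper : IsPeriodicPt g (s + 1) x := by
    rw [IsPeriodicPt, IsFixedPt, iterate_succ_apply', hs, hy]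
  have hpos := hper.minimalPeriod_pos s.succ_pos
  obtain ⟨q, hq⟩ := hper.minimalPeriod_dvd
  have hmod : s % minimalPeriod g x = minimalPeriod g x - 1 := by
    rcases q with _ | q
    · omega
    · rw [Nat.mul_succ] at hq
      rw [show s = minimalPeriod g x * q + (minimalPeriod g x - 1) by omega,
        Nat.mul_add_mod, Nat.mod_eq_of_lt (by omega)]
  rw [← hs, ← iterate_mod_minimalPeriod_eq, hmod]

theorem exists_rank_lt {α : Type*} (g : α → α) (z : α) :
    ∃ d : α → ℕ, ∀ k, (∃ s, g^[s] k = z) → k ≠ z → d (g k) < d k := by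
  refine ⟨fun k => if h : ∃ s, g^[s] k = z then Nat.find h else 0, fun k h hk => ?_⟩
  obtain ⟨s, hs⟩ : ∃ s, Nat.find h = s + 1 :=
    Nat.exists_eq_add_one.2 (Nat.pos_of_ne_zero fun h0 => hk (by simpa [h0] using Nat.find_spec h))
  have hgk : g^[s] (g k) = z := by
    have := Nat.find_spec h
    rwa [hs, iterate_succ_apply] at this
  have hex : ∃ s, g^[s] (g k) = z := ⟨s, hgk⟩
  simp only [dif_pos h, dif_pos hex, hs]
  exact Nat.lt_succ_of_le (Nat.find_le hgk)

theorem update_some_eq_update_some_iff {α β : Type*} [DecidableEq α] {t t' : α → Option β}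
    {j : α} {e e' : β} (ht : t j = none) (ht' : t' j = none) :
    update t j (some e) = update t' j (some e') ↔ e = e' ∧ t = t' := by
  refine ⟨fun h => ⟨by simpa using congrFun h j, ?_⟩, by rintro ⟨rfl, rfl⟩; rfl⟩
  have h' := congrArg (update · j none) h
  simp only [update_idem] at h'
  rwa [update_eq_self_iff.2 ht.symm, update_eq_self_iff.2 ht'.symm] at h'

end Function

theorem Relation.exists_rank_lt {α : Type*} (r : α → α → Prop) (z : α) :
    ∃ d : α → ℕ, ∀ k, ReflTransGen r k z → k ≠ z → ∃ k', r k k' ∧ d k' < d k := by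
  let reachesIn : ℕ → α → Prop := fun s => (fun P a => ∃ b, r a b ∧ P b)^[s] (· = z)
  have hreach : ∀ k, ReflTransGen r k z → ∃ s, reachesIn s k := by
    intro k hk
    induction hk using ReflTransGen.head_induction_on with
    | refl => exact ⟨0, rfl⟩
    | head hab _ ih =>
      obtain ⟨s, hs⟩ := ih
      exact ⟨s + 1, by simp only [reachesIn, Function.iterate_succ_apply']; exact ⟨_, hab, hs⟩⟩
  refine ⟨fun k => if h : ∃ s, reachesIn s k then Nat.find h else 0, fun k hk hkz => ?_⟩
  have h := hreach k hk
  obtain ⟨s, hs⟩ : ∃ s, Nat.find h = s + 1 :=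
    Nat.exists_eq_add_one.2 (Nat.pos_of_ne_zero fun h0 => hkz (by
      simpa [h0, reachesIn] using Nat.find_spec h))
  have hspec := Nat.find_spec h
  rw [hs] at hspec
  simp only [reachesIn, Function.iterate_succ_apply'] at hspec
  obtain ⟨k', hkk', hk'⟩ := hspec
  have hex : ∃ s, reachesIn s k' := ⟨s, hk'⟩
  refine ⟨k', hkk', ?_⟩
  simp only [dif_pos h, dif_pos hex, hs]
  exact Nat.lt_succ_of_le (Nat.find_le hk')

theorem Matrix.exists_vecMul_eq_iff {K m n : Type*} [Field K] [Fintype m] [Fintype n]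
    [DecidableEq m] [DecidableEq n] (A : Matrix m n K) (c : n → K) :
    (∃ z, z ᵥ* A = c) ↔ ∀ u, A *ᵥ u = 0 → c ⬝ᵥ u = 0 := by
  constructor
  · rintro ⟨z, rfl⟩ u hu
    rw [← dotProduct_mulVec, hu, dotProduct_zero]
  · intro h
    have hmem : dotProductEquiv K n c ∈ (LinearMap.ker A.mulVecLin).dualAnnihilator :=
      (Submodule.mem_dualAnnihilator _).2 fun u hu => h u hu
    rw [← LinearMap.range_dualMap_eq_dualAnnihilator_ker] at hmem
    obtain ⟨ψ, hψ⟩ := hmem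
    refine ⟨(dotProductEquiv K m).symm ψ, dotProduct_eq _ _ fun u => ?_⟩
    have hz := LinearMap.congr_fun ((dotProductEquiv K m).apply_symm_apply ψ) (A *ᵥ u)
    have hc := LinearMap.congr_fun hψ u
    rw [← dotProduct_mulVec]
    simp only [dotProductEquiv_apply_apply, LinearMap.dualMap_apply, mulVecLin_apply] at hz hc
    rw [hz, hc]

theorem Module.Basis.forall_mem_eq_zero_iff {ι R M N : Type*} [Semiring R] [AddCommMonoid M]
    [Module R M] [AddCommMonoid N] [Module R N] {S : Submodule R M} (b : Module.Basis ι R S)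
    (φ : M →ₗ[R] N) : (∀ u ∈ S, φ u = 0) ↔ ∀ i, φ (b i) = 0 := by
  refine ⟨fun h i => h _ (b i).2, fun h u hu => ?_⟩
  simpa using LinearMap.congr_fun (b.ext (f₁ := φ ∘ₗ S.subtype) (f₂ := 0) h) ⟨u, hu⟩

theorem Real.prod_rpow_eq_one_iff {ι : Type*} [Fintype ι] {a : ι → ℝ} (ha : ∀ j, 0 < a j)
    (u : ι → ℝ) : ∏ j, a j ^ u j = 1 ↔ ∑ j, Real.log (a j) * u j = 0 := by
  simp only [Real.rpow_def_of_pos (ha _), ← Real.exp_sum, Real.exp_eq_one_iff]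

namespace ReactionGraph

noncomputable def edgeWeight {α ι : Type*} [Fintype α] (κ : ι → ℝ) (f : α → Option ι) : ℝ :=
  ∏ k, (f k).elim 1 κ

theorem edgeWeight_update_some {α ι : Type*} [Fintype α] [DecidableEq α] (κ : ι → ℝ)
    {f : α → Option ι} {j : α} (hj : f j = none) (e : ι) :
    edgeWeight κ (Function.update f j (some e)) = κ e * edgeWeight κ f := by
  rw [edgeWeight, edgeWeight, ← mul_prod_erase univ _ (mem_univ j),
    ← mul_prod_erase univ (fun k => (f k).elim 1 κ) (mem_univ j), hj, Option.elim_none, one_mul,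
    Function.update_self, Option.elim_some]
  congr 1
  exact prod_congr rfl fun k hk => by rw [Function.update_of_ne (ne_of_mem_erase hk)]

theorem edgeWeight_pos {α ι : Type*} [Fintype α] {κ : ι → ℝ} (hκ : ∀ e, 0 < κ e)
    (f : α → Option ι) : 0 < edgeWeight κ f :=
  prod_pos fun k _ => by cases f k <;> simp [hκ]

variable {n p : ℕ} {G : ReactionGraph n p}

theorem conn_refl (i : Fin G.m) : G.Conn i i := Relation.EqvGen.refl i

theorem Conn.symm {i k : Fin G.m} (h : G.Conn i k) : G.Conn k i := Relation.EqvGen.symm _ _ h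

theorem Conn.trans {i j k : Fin G.m} (h : G.Conn i j) (h' : G.Conn j k) : G.Conn i k :=
  Relation.EqvGen.trans _ _ _ h h'

theorem conn_src_tgt (e : Fin p) : G.Conn (G.src e) (G.tgt e) :=
  Relation.EqvGen.rel _ _ ⟨e, Or.inl ⟨rfl, rfl⟩⟩

theorem Reach.conn {i k : Fin G.m} (h : G.Reach i k) : G.Conn i k := by
  induction h with
  | refl => exact conn_refl i
  | tail _ hstep ih =>
    obtain ⟨e, rfl, rfl⟩ := hstep
    exact ih.trans (conn_src_tgt e)

variable (G) in
def ConstOnComponents {β : Type*} (g : Fin G.m → β) : Prop :=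
  ∀ j k, G.Conn j k → g j = g k

variable (G) in
def IsNodeBalanced (κ : Fin p → ℝ) (w : Fin G.m → ℝ) : Prop :=
  ∀ i, ∑ e ∈ univ.filter (G.tgt · = i), κ e * w (G.src e) =
    ∑ e ∈ univ.filter (G.src · = i), κ e * w (G.src e)

theorem inc_mulVec_apply (v : Fin p → ℝ) (i : Fin G.m) :
    (G.inc *ᵥ v) i =
      ∑ e ∈ univ.filter (G.tgt · = i), v e - ∑ e ∈ univ.filter (G.src · = i), v e := by
  simp [inc, mulVec, dotProduct, sub_mul, sum_sub_distrib, sum_filter]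

theorem inc_mulVec_eq_zero_iff (κ : Fin p → ℝ) (w : Fin G.m → ℝ) :
    G.inc *ᵥ (fun e => κ e * w (G.src e)) = 0 ↔ G.IsNodeBalanced κ w := by
  simp only [funext_iff, inc_mulVec_apply, Pi.zero_apply, sub_eq_zero, IsNodeBalanced]

namespace IsNodeBalanced

variable {κ : Fin p → ℝ} {v w : Fin G.m → ℝ}

theorem sub (hv : G.IsNodeBalanced κ v) (hw : G.IsNodeBalanced κ w) :
    G.IsNodeBalanced κ (v - w) := fun i => by
  simp only [Pi.sub_apply, mul_sub, sum_sub_distrib, hv i, hw i]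

theorem mul (hw : G.IsNodeBalanced κ w) {c : Fin G.m → ℝ} (hc : G.ConstOnComponents c) :
    G.IsNodeBalanced κ (c * w) := fun i => by
  have hin : ∀ e ∈ univ.filter (G.tgt · = i), κ e * (c * w) (G.src e) =
      c i * (κ e * w (G.src e)) := fun e he => by
    rw [Pi.mul_apply, hc _ _ ((mem_filter.1 he).2 ▸ conn_src_tgt e)]; ring
  have hout : ∀ e ∈ univ.filter (G.src · = i), κ e * (c * w) (G.src e) =
      c i * (κ e * w (G.src e)) := fun e he => by
    rw [Pi.mul_apply, (mem_filter.1 he).2]; ring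
  rw [sum_congr rfl hin, sum_congr rfl hout, ← mul_sum, ← mul_sum, hw i]

theorem apply_src_eq_zero (hκ : ∀ e, 0 < κ e) (hv : G.IsNodeBalanced κ v) {c : Fin G.m}
    (hnn : ∀ e, G.tgt e = c → 0 ≤ v (G.src e)) (hc : v c = 0) {e : Fin p} (he : G.tgt e = c) :
    v (G.src e) = 0 := by
  have hout : ∑ e ∈ univ.filter (G.src · = c), κ e * v (G.src e) = 0 :=
    sum_eq_zero fun e he => by rw [(mem_filter.1 he).2, hc, mul_zero]
  have hterm := (sum_eq_zero_iff_of_nonneg fun e he =>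
    mul_nonneg (hκ e).le (hnn e (mem_filter.1 he).2)).1 ((hv c).trans hout) e (by simp [he])
  exact (mul_eq_zero.1 hterm).resolve_left (hκ e).ne'

theorem eq_zero_of_reach (hκ : ∀ e, 0 < κ e) (hv : G.IsNodeBalanced κ v) {c : Fin G.m}
    (hnn : ∀ k, G.Conn c k → 0 ≤ v k) (hc : v c = 0) {b : Fin G.m} (hb : G.Reach b c) :
    v b = 0 := by
  induction hb using Relation.ReflTransGen.head_induction_on with
  | refl => exact hc
  | head hstep hrest ih =>
    obtain ⟨e, rfl, rfl⟩ := hstep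
    refine hv.apply_src_eq_zero hκ (fun e' he' => hnn _ ?_) ih rfl
    rw [← he'] at hrest
    exact (Reach.conn hrest).symm.trans (conn_src_tgt e').symm

/-- Maximum principle: `M * w - v` is node balanced, nonnegative on the component and zero where
the ratio `v / w` attains its maximum `M`, hence zero on the whole component. -/
theorem constOnComponents_div (hwr : G.WeaklyReversible) (hκ : ∀ e, 0 < κ e)
    (hv : G.IsNodeBalanced κ v) (hw : G.IsNodeBalanced κ w) (hwpos : ∀ k, 0 < w k) :
    G.ConstOnComponents (v / w) := by
  intro j k hjk
  obtain ⟨a, ha, hmax⟩ := exists_max_image (univ.filter (G.Conn j ·)) (v / w)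
    ⟨j, mem_filter.2 ⟨mem_univ _, conn_refl j⟩⟩
  have hja : G.Conn j a := (mem_filter.1 ha).2
  set M := (v / w) a
  have hdiff : G.IsNodeBalanced κ (fun k => M * w k - v k) :=
    (hw.mul (c := fun _ => M) fun _ _ _ => rfl).sub hv
  have hnn : ∀ k, G.Conn a k → 0 ≤ M * w k - v k := fun k hak => by
    have := hmax k (mem_filter.2 ⟨mem_univ _, hja.trans hak⟩)
    rw [Pi.div_apply, div_le_iff₀ (hwpos k)] at this
    linarith
  have hzero : M * w a - v a = 0 := by
    rw [show M = v a / w a from rfl, div_mul_cancel₀ _ (hwpos a).ne', sub_self]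
  have hratio : ∀ b, G.Conn j b → (v / w) b = M := fun b hjb => by
    have := hdiff.eq_zero_of_reach hκ hnn hzero (hwr b a (hjb.symm.trans hja))
    rw [sub_eq_zero] at this
    rw [Pi.div_apply, ← this, mul_div_assoc, div_self (hwpos b).ne', mul_one]
  rw [hratio j (conn_refl j), hratio k hjk]

end IsNodeBalanced

variable (G) in
def next (f : Fin G.m → Option (Fin p)) (k : Fin G.m) : Fin G.m := (f k).elim k G.tgt

theorem next_of_eq_some {f : Fin G.m → Option (Fin p)} {k : Fin G.m} {e : Fin p}
    (h : f k = some e) : G.next f k = G.tgt e := by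
  simp [next, h]

variable (G) in
/-- The edges chosen by `f` form a spanning subgraph of the component of `i` with out-degree one
whose unique cycle passes through `i`. -/
structure IsUnicyclicAt (i : Fin G.m) (f : Fin G.m → Option (Fin p)) : Prop where
  exists_eq_some : ∀ k, G.Conn i k → ∃ e, f k = some e
  src_eq : ∀ k e, f k = some e → G.src e = k
  conn : ∀ k e, f k = some e → G.Conn i k
  reach : ∀ k, G.Conn i k → ∃ s, (G.next f)^[s] k = i

theorem IsSpanningTree.reach {j : Fin G.m} {t f : Fin G.m → Option (Fin p)}
    (ht : G.IsSpanningTree j t) (hf : ∀ k, k ≠ j → f k = t k) {k : Fin G.m} (hk : G.Conn j k) :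
    ∃ s, (G.next f)^[s] k = j := by
  obtain ⟨-, hsome, hedge, d, hd⟩ := ht
  induction hdk : d k using Nat.strong_induction_on generalizing k with
  | _ _ ih =>
    by_cases hkj : k = j
    · exact ⟨0, hkj⟩
    obtain ⟨e, he⟩ := hsome k hkj hk
    obtain ⟨hsrc, -, -⟩ := hedge k e he
    obtain ⟨s, hs⟩ := ih _ (hdk ▸ hd k e he) (hk.trans (hsrc ▸ conn_src_tgt e)) rfl
    exact ⟨s + 1, by rw [Function.iterate_succ_apply, next_of_eq_some ((hf k hkj).trans he), hs]⟩

theorem IsSpanningTree.isUnicyclicAt_update {e : Fin p} {t : Fin G.m → Option (Fin p)}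
    (ht : G.IsSpanningTree (G.src e) t) {i : Fin G.m} (hi : G.tgt e = i ∨ G.src e = i) :
    G.IsUnicyclicAt i (Function.update t (G.src e) (some e)) := by
  have hconn : G.Conn i (G.src e) := by
    rcases hi with rfl | rfl
    exacts [(conn_src_tgt e).symm, conn_refl _]
  have hupd : ∀ k, k ≠ G.src e → Function.update t (G.src e) (some e) k = t k :=
    fun k hk => Function.update_of_ne hk _ _
  refine ⟨fun k hk => ?_, fun k e' he' => ?_, fun k e' he' => ?_, fun k hk => ?_⟩
  · by_cases hke : k = G.src e
    · exact ⟨e, hke ▸ Function.update_self _ _ _⟩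
    · rw [hupd k hke]
      exact ht.2.1 k hke (hconn.symm.trans hk)
  · by_cases hke : k = G.src e
    · subst hke
      rw [Function.update_self, Option.some_inj] at he'
      rw [he']
    · exact (ht.2.2.1 k e' (hupd k hke ▸ he')).1
  · by_cases hke : k = G.src e
    · exact hke ▸ hconn
    · exact hconn.trans (ht.2.2.1 k e' (hupd k hke ▸ he')).2.1
  · obtain ⟨s, hs⟩ := ht.reach hupd (hconn.symm.trans hk)
    rcases hi with rfl | rfl
    · refine ⟨s + 1, ?_⟩
      rw [Function.iterate_succ_apply', hs, next_of_eq_some (Function.update_self _ _ _)]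
    · exact ⟨s, hs⟩

theorem IsSpanningTree.src_eq_iterate_minimalPeriod {e : Fin p} {t : Fin G.m → Option (Fin p)}
    (ht : G.IsSpanningTree (G.src e) t) :
    let g := G.next (Function.update t (G.src e) (some e))
    G.src e = g^[Function.minimalPeriod g (G.tgt e) - 1] (G.tgt e) := by
  obtain ⟨s, hs⟩ := ht.reach (fun k hk => Function.update_of_ne hk (some e) t) (conn_src_tgt e)
  exact Function.eq_iterate_minimalPeriod_pred hs (next_of_eq_some (Function.update_self _ _ _))

namespace IsUnicyclicAt

variable {i : Fin G.m} {f : Fin G.m → Option (Fin p)}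

theorem conn_iterate (hf : G.IsUnicyclicAt i f) (s : ℕ) : G.Conn i ((G.next f)^[s] i) := by
  induction s with
  | zero => exact conn_refl i
  | succ s ih =>
    obtain ⟨e, he⟩ := hf.exists_eq_some _ ih
    rw [Function.iterate_succ_apply', next_of_eq_some he]
    exact ih.trans (hf.src_eq _ e he ▸ conn_src_tgt e)

theorem minimalPeriod_pos (hf : G.IsUnicyclicAt i f) :
    0 < Function.minimalPeriod (G.next f) i := by
  obtain ⟨e, he⟩ := hf.exists_eq_some i (conn_refl i)
  have hnext : G.Conn i (G.next f i) :=
    next_of_eq_some he ▸ hf.src_eq i e he ▸ conn_src_tgt e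
  obtain ⟨s, hs⟩ := hf.reach _ hnext
  exact Function.IsPeriodicPt.minimalPeriod_pos s.succ_pos (by
    rw [Function.IsPeriodicPt, Function.IsFixedPt, Function.iterate_succ_apply, hs])

/-- The depth of a node in the tree is its hitting time of `z`. -/
theorem isSpanningTree_update_none (hf : G.IsUnicyclicAt i f) {z : Fin G.m} (hz : G.Conn i z)
    (hreach : ∀ k, G.Conn i k → ∃ s, (G.next f)^[s] k = z) :
    G.IsSpanningTree z (Function.update f z none) := by
  have hupd : ∀ k e, Function.update f z none k = some e → k ≠ z ∧ f k = some e := by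
    intro k e he
    have hkz : k ≠ z := by rintro rfl; simp at he
    exact ⟨hkz, by rwa [Function.update_of_ne hkz] at he⟩
  obtain ⟨d, hd⟩ := Function.exists_rank_lt (G.next f) z
  refine ⟨Function.update_self _ _ _, fun k hkz hk => ?_, fun k e he => ?_, d, fun k e he => ?_⟩
  · rw [Function.update_of_ne hkz]
    exact hf.exists_eq_some k (hz.trans hk)
  · obtain ⟨hkz, he⟩ := hupd k e he
    exact ⟨hf.src_eq k e he, hz.symm.trans (hf.conn k e he), hkz⟩
  · obtain ⟨hkz, he⟩ := hupd k e he
    rw [← next_of_eq_some he]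
    exact hd k (hreach k (hf.conn k e he)) hkz

theorem exists_update_eq (hf : G.IsUnicyclicAt i f) {z : Fin G.m} (hz : G.Conn i z)
    (hreach : ∀ k, G.Conn i k → ∃ s, (G.next f)^[s] k = z) :
    ∃ e t, G.src e = z ∧ G.tgt e = G.next f z ∧ G.IsSpanningTree (G.src e) t ∧
      Function.update t (G.src e) (some e) = f := by
  obtain ⟨e, he⟩ := hf.exists_eq_some z hz
  have hsrc := hf.src_eq z e he
  refine ⟨e, Function.update f z none, hsrc, (next_of_eq_some he).symm, ?_, ?_⟩
  · rw [hsrc]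
    exact hf.isSpanningTree_update_none hz hreach
  · rw [hsrc, Function.update_idem, ← he, Function.update_eq_self]

end IsUnicyclicAt

theorem K_eq_sum_edgeWeight (κ : Fin p → ℝ) (i : Fin G.m) :
    G.K κ i = ∑ t : {t // G.IsSpanningTree i t}, edgeWeight κ t.1 := rfl

/-- `hsrc` and `hsurj` make `(e, t) ↦ t + e` a bijection onto the graphs unicyclic at `i`. -/
theorem sum_mul_K_eq_sum_edgeWeight (κ : Fin p → ℝ) (P : Fin p → Prop) [DecidablePred P]
    (i : Fin G.m) (hP : ∀ e, P e → G.tgt e = i ∨ G.src e = i)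
    (hsrc : ∀ e e' t t', P e → P e' → G.IsSpanningTree (G.src e) t →
      G.IsSpanningTree (G.src e') t' →
      Function.update t (G.src e) (some e) = Function.update t' (G.src e') (some e') →
      G.src e = G.src e')
    (hsurj : ∀ f, G.IsUnicyclicAt i f →
      ∃ e t, P e ∧ G.IsSpanningTree (G.src e) t ∧ Function.update t (G.src e) (some e) = f) :
    ∑ e ∈ univ.filter P, κ e * G.K κ (G.src e) =
      ∑ f : {f // G.IsUnicyclicAt i f}, edgeWeight κ f.1 := by
  rw [sum_subtype (univ.filter P) (p := P) (by simp)]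
  simp only [K_eq_sum_edgeWeight, mul_sum]
  refine Eq.trans (Fintype.sum_sigma
    (fun q : Σ e : {e // P e}, {t // G.IsSpanningTree (G.src e.1) t} =>
      κ q.1.1 * edgeWeight κ q.2.1)).symm ?_
  refine Fintype.sum_bijective (fun q => ⟨Function.update q.2.1 (G.src q.1.1) (some q.1.1),
    q.2.2.isUnicyclicAt_update (hP _ q.1.2)⟩) ⟨?_, ?_⟩ _ _
    fun q => (edgeWeight_update_some κ q.2.2.1 _).symm
  · rintro ⟨⟨e, he⟩, ⟨t, ht⟩⟩ ⟨⟨e', he'⟩, ⟨t', ht'⟩⟩ h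
    have h' := congrArg Subtype.val h
    dsimp only at h'
    have hs := hsrc e e' t t' he he' ht ht' h'
    rw [← hs] at h'
    obtain ⟨rfl, rfl⟩ := (Function.update_some_eq_update_some_iff ht.1 (hs ▸ ht'.1)).1 h'
    rfl
  · rintro ⟨f, hf⟩
    obtain ⟨e, t, he, ht, rfl⟩ := hsurj f hf
    exact ⟨⟨⟨e, he⟩, ⟨t, ht⟩⟩, rfl⟩

/-- Kirchhoff's matrix-tree theorem. Among the edges into `i`, the one added to a tree is the edge
closing the cycle through `i`. -/
theorem isNodeBalanced_K (κ : Fin p → ℝ) : G.IsNodeBalanced κ (G.K κ) := by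
  intro i
  rw [sum_mul_K_eq_sum_edgeWeight κ (G.tgt · = i) i (fun _ => Or.inl) ?inInj ?inSurj,
    sum_mul_K_eq_sum_edgeWeight κ (G.src · = i) i (fun _ => Or.inr) ?outInj ?outSurj]
  case inInj =>
    intro e e' t t' he he' ht ht' h
    rw [ht.src_eq_iterate_minimalPeriod, ht'.src_eq_iterate_minimalPeriod, he, he']
    simp only [h]
  case inSurj =>
    intro f hf
    set T := Function.minimalPeriod (G.next f) i
    obtain ⟨e, t, -, htgt, ht, rfl⟩ := hf.exists_update_eq (hf.conn_iterate (T - 1))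
      fun k hk => let ⟨s, hs⟩ := hf.reach k hk; ⟨T - 1 + s, by rw [Function.iterate_add_apply, hs]⟩
    refine ⟨e, t, ?_, ht, rfl⟩
    rw [htgt, ← Function.iterate_succ_apply' (G.next _), Nat.succ_eq_add_one,
      Nat.sub_add_cancel hf.minimalPeriod_pos, Function.iterate_minimalPeriod]
  case outInj => exact fun e e' _ _ he he' _ _ _ => he.trans he'.symm
  case outSurj =>
    intro f hf
    obtain ⟨e, t, hsrc, -, ht, rfl⟩ := hf.exists_update_eq (conn_refl i) hf.reach
    exact ⟨e, t, hsrc, ht, rfl⟩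

theorem exists_isSpanningTree (hwr : G.WeaklyReversible) (i : Fin G.m) :
    ∃ t, G.IsSpanningTree i t := by
  obtain ⟨d, hd⟩ := Relation.exists_rank_lt (fun a b => ∃ e, G.src e = a ∧ G.tgt e = b) i
  have hedge : ∀ k, k ≠ i → G.Conn i k → ∃ e, G.src e = k ∧ d (G.tgt e) < d k :=
    fun k hki hk => by
      obtain ⟨_, ⟨e, hsrc, rfl⟩, hlt⟩ := hd k (hwr k i hk.symm) hki
      exact ⟨e, hsrc, hlt⟩
  choose E hE using hedge
  let t : Fin G.m → Option (Fin p) := fun k =>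
    if h : k ≠ i ∧ G.Conn i k then some (E k h.1 h.2) else none
  have ht : ∀ k e, t k = some e → ∃ h : k ≠ i ∧ G.Conn i k, E k h.1 h.2 = e := by
    intro k e he
    simp only [t] at he
    split_ifs at he with h
    exact ⟨h, Option.some_inj.1 he⟩
  refine ⟨t, by simp [t], fun k hki hk => ⟨_, dif_pos ⟨hki, hk⟩⟩, fun k e he => ?_, d,
    fun k e he => ?_⟩
  · obtain ⟨h, rfl⟩ := ht k e he
    exact ⟨(hE k h.1 h.2).1, h.2, h.1⟩
  · obtain ⟨h, rfl⟩ := ht k e he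
    exact (hE k h.1 h.2).2

theorem K_pos (hwr : G.WeaklyReversible) {κ : Fin p → ℝ} (hκ : ∀ e, 0 < κ e) (i : Fin G.m) :
    0 < G.K κ i := by
  obtain ⟨t, ht⟩ := exists_isSpanningTree hwr i
  exact sum_pos (fun t _ => edgeWeight_pos hκ t.1) ⟨⟨t, ht⟩, mem_univ _⟩

theorem monomial_pos {x : Fin n → ℝ} (hx : Pos x) (y : Fin n → ℕ) : 0 < monomial x y :=
  prod_pos fun i _ => pow_pos (hx i) _

theorem log_monomial {x : Fin n → ℝ} (hx : Pos x) (y : Fin n → ℕ) :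
    Real.log (monomial x y) = ∑ i, (y i : ℝ) * Real.log (x i) := by
  simp only [monomial, Real.log_prod fun i _ => (pow_pos (hx i) _).ne', Real.log_pow]

theorem monomial_exp (a : Fin n → ℝ) (y : Fin n → ℕ) :
    monomial (fun i => Real.exp (a i)) y = Real.exp (∑ i, (y i : ℝ) * a i) := by
  simp only [monomial, Real.exp_sum, Real.exp_nat_mul]

theorem exists_pos_isNodeBalanced_monomial_iff (hwr : G.WeaklyReversible) {κ : Fin p → ℝ}
    (hκ : ∀ e, 0 < κ e) :
    (∃ x, Pos x ∧ G.IsNodeBalanced κ (fun j => monomial x (G.Y j))) ↔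
      ∃ (a : Fin n → ℝ) (g : Fin G.m → ℝ), G.ConstOnComponents g ∧
        ∀ j, Real.log (G.K κ j) = ∑ i, (G.Y j i : ℝ) * a i + g j := by
  constructor
  · rintro ⟨x, hx, hbal⟩
    have hw : ∀ j, 0 < monomial x (G.Y j) := fun j => monomial_pos hx _
    refine ⟨Real.log ∘ x, fun j => Real.log (G.K κ j / monomial x (G.Y j)), fun j k hjk => ?_,
      fun j => ?_⟩
    · exact congrArg Real.log ((isNodeBalanced_K κ).constOnComponents_div hwr hκ hbal hw j k hjk)
    · dsimp only [Function.comp_apply]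
      rw [Real.log_div (K_pos hwr hκ j).ne' (hw j).ne', log_monomial hx]
      ring
  · rintro ⟨a, g, hg, hK⟩
    refine ⟨fun i => Real.exp (a i), fun i => Real.exp_pos _, ?_⟩
    have hmono : (fun j => monomial (fun i => Real.exp (a i)) (G.Y j)) =
        (fun j => Real.exp (-g j)) * G.K κ := funext fun j => by
      rw [monomial_exp, Pi.mul_apply, ← Real.exp_log (K_pos hwr hκ j), ← Real.exp_add, hK j]
      ring_nf
    rw [hmono]
    exact (isNodeBalanced_K κ).mul fun j k hjk => by rw [hg j k hjk]

theorem vecMul_psiMat_apply (z : Fin n ⊕ Fin G.m → ℝ) (j : Fin G.m) :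
    (z ᵥ* G.psiMat) j =
      ∑ i, (G.Y j i : ℝ) * z (Sum.inl i) + ∑ i₀, if G.Conn i₀ j then z (Sum.inr i₀) else 0 := by
  simp [vecMul, dotProduct, Fintype.sum_sum_type, psiMat, mul_comm]

theorem exists_vecMul_psiMat_eq_iff (c : Fin G.m → ℝ) :
    (∃ z, z ᵥ* G.psiMat = c) ↔
      ∃ (a : Fin n → ℝ) (g : Fin G.m → ℝ), G.ConstOnComponents g ∧
        ∀ j, c j = ∑ i, (G.Y j i : ℝ) * a i + g j := by
  simp only [funext_iff, vecMul_psiMat_apply]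
  constructor
  · rintro ⟨z, hz⟩
    refine ⟨z ∘ Sum.inl, fun j => ∑ i₀, if G.Conn i₀ j then z (Sum.inr i₀) else 0,
      fun j k hjk => sum_congr rfl fun i₀ _ => ?_, fun j => (hz j).symm⟩
    have hiff : G.Conn i₀ j ↔ G.Conn i₀ k := ⟨fun h => h.trans hjk, fun h => h.trans hjk.symm⟩
    simp only [hiff]
  · rintro ⟨a, g, hg, hc⟩
    let rep : Fin G.m → Fin G.m := fun k => (Quotient.mk G.connSetoid k).out
    refine ⟨Sum.elim a fun i₀ => if rep i₀ = i₀ then g i₀ else 0, fun j => ?_⟩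
    simp only [hc j, Sum.elim_inl, Sum.elim_inr]
    congr 1
    have hrep : G.Conn (rep j) j := Quotient.mk_out (s := G.connSetoid) j
    rw [sum_eq_single (rep j), if_pos hrep, if_pos (by simp only [rep, Quotient.out_eq]),
      hg _ _ hrep]
    · intro i₀ _ hne
      split_ifs with hconn hi₀
      · exact absurd (hi₀.symm.trans (congrArg Quotient.out (Quotient.sound hconn))) hne
      all_goals rfl
    · simp

end ReactionGraph

open ReactionGraph in
theorem exists_pos_node_balanced_iff_general {n p : ℕ} (G : ReactionGraph n p)
    (hwr : G.WeaklyReversible) (κ : Fin p → ℝ) (hκ : ∀ e, 0 < κ e)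
    (d : ℕ) (b : Module.Basis (Fin d) ℝ G.kerPsi) :
    (∃ x : Fin n → ℝ, Pos x ∧ G.inc.mulVec (G.massAction κ x) = 0) ↔
      ∀ i : Fin d, ∏ j : Fin G.m, Real.rpow (G.K κ j) ((b i : Fin G.m → ℝ) j) = 1 := by
  calc (∃ x, Pos x ∧ G.inc *ᵥ G.massAction κ x = 0)
      ↔ ∃ x, Pos x ∧ G.IsNodeBalanced κ (fun j => monomial x (G.Y j)) :=
        exists_congr fun x => and_congr_right fun _ =>
          inc_mulVec_eq_zero_iff (G := G) κ (fun j => monomial x (G.Y j))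
    _ ↔ ∃ (a : Fin n → ℝ) (g : Fin G.m → ℝ), G.ConstOnComponents g ∧
          ∀ j, Real.log (G.K κ j) = ∑ i, (G.Y j i : ℝ) * a i + g j :=
        exists_pos_isNodeBalanced_monomial_iff hwr hκ
    _ ↔ ∃ z, z ᵥ* G.psiMat = Real.log ∘ G.K κ := (exists_vecMul_psiMat_eq_iff _).symm
    _ ↔ ∀ u ∈ G.kerPsi, dotProductEquiv ℝ _ (Real.log ∘ G.K κ) u = 0 :=
        Matrix.exists_vecMul_eq_iff _ _
    _ ↔ ∀ i, dotProductEquiv ℝ _ (Real.log ∘ G.K κ) (b i) = 0 := b.forall_mem_eq_zero_iff _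
    _ ↔ _ := forall_congr' fun i => (Real.prod_rpow_eq_one_iff (K_pos hwr hκ) _).symm

open ReactionGraph in
/-- existence criterion. For a weakly reversible `G` with mass-action rate
constants `κ`, and `u_1, …, u_{δ_G}` a basis of `ker Ψ_G`, a positive node balanced steady
state w.r.t. `G` exists iff `∏_j K_{G,j}^{u_{ij}} = 1` for all `i`. -/
theorem exists_pos_node_balanced_iff {n p : ℕ} (G : ReactionGraph n p)
    (hwr : G.WeaklyReversible) (κ : Fin p → ℝ) (hκ : ∀ e, 0 < κ e)
    (d : ℕ) (hd : (d : ℤ) = G.deficiency) (b : Module.Basis (Fin d) ℝ G.kerPsi) :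
    (∃ x : Fin n → ℝ, Pos x ∧ G.inc.mulVec (G.massAction κ x) = 0) ↔
      ∀ i : Fin d, ∏ j : Fin G.m, Real.rpow (G.K κ j) ((b i : Fin G.m → ℝ) j) = 1 :=
  exists_pos_node_balanced_iff_general G hwr κ hκ d b
end

section
/- If the mass-action system (N, G, κ) admits one positive node balanced steady state with respect to a weakly reversible reaction graph G, then every positive steady state of N is node balanced with respect to G, and there is exactly one positive steady state in each stoichiometric compatibility class, which is locally asymptotically stable relative to its class. -/
open scoped Classical

/-!
Everything is measured against a positive node balanced state `xs`. Writing
`μ = log (x / xs)` and `ν = μᵀ Y` on complexes, mass action gives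
`v(x)_e = v(xs)_e · exp ν(src e)`, hence, by `eᵃ (b - a) ≤ eᵇ - eᵃ`,
`⟪μ, N v(x)⟫ = ∑ₑ v(xs)_e e^{ν(src e)} (ν(tgt e) - ν(src e))`
`          ≤ ∑ₑ v(xs)_e (e^{ν(tgt e)} - e^{ν(src e)}) = 0`,
the last sum vanishing because `v(xs)` is node balanced; equality holds iff `μ ⊥ S`.
So positive steady states are node balanced, and the node balanced states are the positive `x`
with `log (x / xs) ⊥ S`. Two of them in one class satisfy `⟪log (x / y), x - y⟫ = 0`, so they
coincide, and one exists in every class by minimizing the relative entropy (Birch). Finally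
`relEntropy xs` is a strict Lyapunov function on the class of `xs`: sublevel sets give
stability, and a uniform rate of decrease away from `xs` gives attractivity.
-/

open Real Set Filter Topology Matrix Metric InformationTheory

lemma exp_mul_sub_le_exp_sub_exp (a b : ℝ) : exp a * (b - a) ≤ exp b - exp a := by
  have h := mul_le_mul_of_nonneg_left (add_one_le_exp (b - a)) (exp_pos a).le
  rw [← exp_add, add_sub_cancel] at h
  linarith

lemma exp_mul_sub_lt_exp_sub_exp {a b : ℝ} (hab : a ≠ b) : exp a * (b - a) < exp b - exp a := by
  have h := mul_lt_mul_of_pos_left (add_one_lt_exp (sub_ne_zero.2 hab.symm)) (exp_pos a)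
  rw [← exp_add, add_sub_cancel] at h
  linarith

lemma sub_mul_log_div_nonneg {a b : ℝ} (ha : 0 < a) (hb : 0 < b) : 0 ≤ (a - b) * log (a / b) := by
  rcases le_total a b with h | h
  · exact mul_nonneg_of_nonpos_of_nonpos (by linarith)
      (log_nonpos (by positivity) ((div_le_one hb).2 h))
  · exact mul_nonneg (by linarith) (log_nonneg ((le_div_iff₀ hb).2 (by linarith)))

lemma eq_of_sub_mul_log_div_eq_zero {a b : ℝ} (ha : 0 < a) (hb : 0 < b)
    (h : (a - b) * log (a / b) = 0) : a = b := by
  rcases mul_eq_zero.1 h with h | h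
  · linarith
  · rcases log_eq_zero.1 h with h | h | h
    · exact absurd h (div_pos ha hb).ne'
    · exact (div_eq_one_iff_eq hb.ne').1 h
    · linarith [div_pos ha hb]

lemma sub_mul_log_le_klFun_sub_klFun {s t : ℝ} (hs : 0 ≤ s) (ht : 0 < t) :
    (s - t) * log t ≤ klFun s - klFun t := by
  rcases hs.eq_or_lt with rfl | hs
  · simp [klFun_apply]; linarith
  · have h := mul_le_mul_of_nonneg_left (log_le_sub_one_of_pos (div_pos ht hs)) hs.le
    rw [log_div ht.ne' hs.ne', mul_sub_one, mul_div_cancel₀ _ hs.ne'] at h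
    simp only [klFun_apply]
    nlinarith

lemma le_klFun_add {s : ℝ} (hs : 0 ≤ s) : s ≤ klFun s + (exp 1 - 1) := by
  have h := sub_mul_log_le_klFun_sub_klFun hs (exp_pos 1)
  simp only [klFun_apply, log_exp] at h ⊢
  linarith

open ReactionGraph

noncomputable def logRatio {n : ℕ} (x y : Fin n → ℝ) : Fin n → ℝ := fun i => log (x i / y i)

/-- `∑ i, (x i * log (x i / c i) - x i + c i)`: the Lyapunov function of Horn and Jackson. -/
noncomputable def relEntropy {n : ℕ} (c x : Fin n → ℝ) : ℝ := ∑ i, c i * klFun (x i / c i)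

section RelEntropy

variable {n : ℕ} {c x y z : Fin n → ℝ}

lemma relEntropy_self (c : Fin n → ℝ) : relEntropy c c = 0 :=
  Finset.sum_eq_zero fun i _ => by by_cases h : c i = 0 <;> simp [h, klFun_one]

lemma relEntropy_nonneg (hc : Pos c) (hx : ∀ i, 0 ≤ x i) : 0 ≤ relEntropy c x :=
  Finset.sum_nonneg fun i _ => mul_nonneg (hc i).le (klFun_nonneg (div_nonneg (hx i) (hc i).le))

lemma relEntropy_pos (hc : Pos c) (hx : ∀ i, 0 ≤ x i) (hne : x ≠ c) : 0 < relEntropy c x := by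
  obtain ⟨j, hj⟩ := Function.ne_iff.1 hne
  refine Finset.sum_pos' (fun i _ => mul_nonneg (hc i).le
    (klFun_nonneg (div_nonneg (hx i) (hc i).le))) ⟨j, Finset.mem_univ j, ?_⟩
  refine mul_pos (hc j) (lt_of_le_of_ne (klFun_nonneg (div_nonneg (hx j) (hc j).le)) ?_)
  rw [ne_comm, Ne, klFun_eq_zero_iff (div_nonneg (hx j) (hc j).le), div_eq_one_iff_eq (hc j).ne']
  exact hj

lemma continuous_relEntropy (c : Fin n → ℝ) : Continuous (relEntropy c) :=
  continuous_finsetSum _ fun i _ =>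
    continuous_const.mul (continuous_klFun.comp ((continuous_apply i).div_const _))

lemma le_relEntropy_add (hc : Pos c) (hx : ∀ i, 0 ≤ x i) (i : Fin n) :
    x i ≤ relEntropy c x + (exp 1 - 1) * c i := by
  have hi := mul_le_mul_of_nonneg_left (le_klFun_add (div_nonneg (hx i) (hc i).le)) (hc i).le
  rw [mul_div_cancel₀ _ (hc i).ne', mul_add] at hi
  have hsingle : c i * klFun (x i / c i) ≤ relEntropy c x :=
    Finset.single_le_sum (f := fun j => c j * klFun (x j / c j))
      (fun j _ => mul_nonneg (hc j).le (klFun_nonneg (div_nonneg (hx j) (hc j).le)))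
      (Finset.mem_univ i)
  linarith

lemma relEntropy_sub_relEntropy_le (hc : Pos c) (hx : ∀ i, 0 ≤ x i) (hy : Pos y) :
    relEntropy c y - relEntropy c x ≤ logRatio y c ⬝ᵥ (y - x) := by
  rw [relEntropy, relEntropy, ← Finset.sum_sub_distrib, dotProduct]
  refine Finset.sum_le_sum fun i _ => ?_
  have h := mul_le_mul_of_nonneg_left (sub_mul_log_le_klFun_sub_klFun
    (div_nonneg (hx i) (hc i).le) (div_pos (hy i) (hc i))) (hc i).le
  rw [← mul_assoc, mul_sub, mul_div_cancel₀ _ (hc i).ne', mul_div_cancel₀ _ (hc i).ne'] at h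
  simp only [logRatio, Pi.sub_apply]
  linarith

lemma HasDerivAt.relEntropy {f : ℝ → Fin n → ℝ} {f' : Fin n → ℝ} {t : ℝ}
    (hf : HasDerivAt f f' t) (hc : Pos c) (hpos : Pos (f t)) :
    HasDerivAt (fun s => relEntropy c (f s)) (logRatio (f t) c ⬝ᵥ f') t := by
  refine HasDerivAt.fun_sum fun i _ => ?_
  have h := ((hasDerivAt_klFun (div_pos (hpos i) (hc i)).ne').comp t
    ((hasDerivAt_pi.1 hf i).div_const (c i))).const_mul (c i)
  rwa [show c i * (Real.log (f t i / c i) * (f' i / c i)) = logRatio (f t) c i * f' i by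
    rw [logRatio]; field_simp [(hc i).ne']] at h

lemma eq_of_logRatio_dotProduct_sub_eq_zero (hx : Pos x) (hy : Pos y)
    (h : logRatio x y ⬝ᵥ (x - y) = 0) : x = y := by
  have hterm : ∀ i, 0 ≤ logRatio x y i * (x - y) i := fun i => by
    rw [mul_comm]; exact sub_mul_log_div_nonneg (hx i) (hy i)
  funext i
  refine eq_of_sub_mul_log_div_eq_zero (hx i) (hy i) ?_
  rw [mul_comm]
  exact (Finset.sum_eq_zero_iff_of_nonneg fun i _ => hterm i).1 h i (Finset.mem_univ i)

lemma logRatio_sub_logRatio (hx : Pos x) (hy : Pos y) (hz : Pos z) :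
    logRatio x z - logRatio y z = logRatio x y := by
  funext i
  simp only [logRatio, Pi.sub_apply]
  rw [log_div (hx i).ne' (hz i).ne', log_div (hy i).ne' (hz i).ne',
    log_div (hx i).ne' (hy i).ne']
  ring

end RelEntropy

lemma isOpen_setOf_pos {n : ℕ} : IsOpen {x : Fin n → ℝ | Pos x} := by
  simpa only [Pos, ofPred_forall] using
    isOpen_iInter_of_finite fun i => isOpen_lt continuous_const (continuous_apply i)

def compatibilityClass {n : ℕ} (S : Submodule ℝ (Fin n → ℝ)) (x₀ : Fin n → ℝ) :
    Set (Fin n → ℝ) :=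
  {x | (∀ i, 0 ≤ x i) ∧ x - x₀ ∈ S}

section Birch

variable {n : ℕ} {c x₀ z : Fin n → ℝ} {K : Set (Fin n → ℝ)}

lemma isClosed_compatibilityClass (S : Submodule ℝ (Fin n → ℝ)) (x₀ : Fin n → ℝ) :
    IsClosed (compatibilityClass S x₀) := by
  refine IsClosed.inter ?_ ((Submodule.closed_of_finiteDimensional S).preimage
    (continuous_id.sub continuous_const))
  exact isClosed_Ici (a := (0 : Fin n → ℝ))

lemma convex_compatibilityClass (S : Submodule ℝ (Fin n → ℝ)) (x₀ : Fin n → ℝ) :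
    Convex ℝ (compatibilityClass S x₀) := by
  rintro x ⟨hx0, hxS⟩ y ⟨hy0, hyS⟩ a b ha hb hab
  refine ⟨fun i => ?_, ?_⟩
  · simp only [Pi.add_apply, Pi.smul_apply, smul_eq_mul]
    exact add_nonneg (mul_nonneg ha (hx0 i)) (mul_nonneg hb (hy0 i))
  · have h : a • x + b • y - x₀ = a • (x - x₀) + b • (y - x₀) := by
      ext i
      simp only [Pi.add_apply, Pi.sub_apply, Pi.smul_apply, smul_eq_mul]
      linear_combination x₀ i * hab
    rw [h]
    exact S.add_mem (S.smul_mem a hxS) (S.smul_mem b hyS)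

/-- Coercivity (`le_relEntropy_add`) confines the sublevel sets to a box. -/
lemma exists_isMinOn_relEntropy (hc : Pos c) (hK : IsClosed K) (hK0 : ∀ x ∈ K, ∀ i, 0 ≤ x i)
    (hx₀ : x₀ ∈ K) : ∃ z ∈ K, IsMinOn (relEntropy c) K z := by
  refine (continuous_relEntropy c).continuousOn.exists_isMinOn' hK hx₀ ?_
  rw [eventually_inf_principal]
  refine mem_cocompact.2 ⟨univ.pi fun i => Icc 0 (relEntropy c x₀ + (exp 1 - 1) * c i),
    isCompact_univ_pi fun _ => isCompact_Icc, fun x hx hxK => ?_⟩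
  obtain ⟨i, -, hi⟩ := not_forall₂.1 hx
  have hlt : relEntropy c x₀ + (exp 1 - 1) * c i < x i :=
    lt_of_not_ge fun h => hi ⟨hK0 x hxK i, h⟩
  linarith [le_relEntropy_add hc (hK0 x hxK) i]

/-- Along the segment from `z` towards a positive point, a vanishing coordinate of `z`
contributes `x₀ j * log θ` to the slope of `relEntropy c`, which tends to `-∞`. -/
lemma pos_of_isMinOn_relEntropy (hc : Pos c) (hK : Convex ℝ K) (hK0 : ∀ x ∈ K, ∀ i, 0 ≤ x i)
    (hx₀K : x₀ ∈ K) (hx₀ : Pos x₀) (hzK : z ∈ K) (hmin : IsMinOn (relEntropy c) K z) :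
    Pos z := by
  by_contra hz
  obtain ⟨j, hj⟩ := not_forall.1 hz
  have hzj : z j = 0 := le_antisymm (not_lt.1 hj) (hK0 z hzK j)
  set D := logRatio x₀ c ⬝ᵥ (x₀ - z)
  set θ := exp (-(|D| + 1) / x₀ j)
  have hθ0 : 0 < θ := exp_pos _
  have hθ1 : θ < 1 := exp_lt_one_iff.2 (div_neg_of_neg_of_pos (by linarith [abs_nonneg D]) (hx₀ j))
  set w := z + θ • (x₀ - z)
  have hwK : w ∈ K := hK.add_smul_sub_mem hzK hx₀K ⟨hθ0.le, hθ1.le⟩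
  have hw : ∀ i, w i = (1 - θ) * z i + θ * x₀ i := fun i => by
    simp only [w, Pi.add_apply, Pi.smul_apply, Pi.sub_apply, smul_eq_mul]; ring
  have hwpos : Pos w := fun i => by
    rw [hw]; nlinarith [hK0 z hzK i, hx₀ i]
  have hslope : ∑ i, (x₀ - z) i * log (w i / x₀ i) ≤ x₀ j * log θ := by
    calc _ ≤ ∑ i, if i = j then x₀ j * log θ else 0 := Finset.sum_le_sum fun i _ => ?_
      _ = x₀ j * log θ := by simp
    split_ifs with hij
    · subst hij
      rw [hw, hzj, Pi.sub_apply, hzj, mul_zero, zero_add, sub_zero,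
        mul_div_cancel_right₀ _ (hx₀ i).ne']
    · have h := sub_mul_log_div_nonneg (hwpos i) (hx₀ i)
      rw [hw] at h ⊢
      simp only [Pi.sub_apply]
      nlinarith
  have hsplit : logRatio w c ⬝ᵥ (w - z) = θ * (∑ i, (x₀ - z) i * log (w i / x₀ i) + D) := by
    simp only [D, logRatio, dotProduct, ← Finset.sum_add_distrib, Finset.mul_sum]
    refine Finset.sum_congr rfl fun i _ => ?_
    rw [show w i / c i = w i / x₀ i * (x₀ i / c i) by field_simp [(hx₀ i).ne'],
      log_mul (div_pos (hwpos i) (hx₀ i)).ne' (div_pos (hx₀ i) (hc i)).ne']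
    simp only [w, Pi.add_apply, Pi.smul_apply, Pi.sub_apply, smul_eq_mul]
    ring
  have hdecr := relEntropy_sub_relEntropy_le hc (hK0 z hzK) hwpos
  have hlog : x₀ j * log θ = -(|D| + 1) := by
    rw [log_exp]; field_simp [(hx₀ j).ne']
  have : θ * (∑ i, (x₀ - z) i * log (w i / x₀ i) + D) < 0 :=
    mul_neg_of_pos_of_neg hθ0 (by linarith [le_abs_self D])
  linarith [isMinOn_iff.1 hmin w hwK]

lemma logRatio_dotProduct_eq_zero_of_isMinOn {S : Submodule ℝ (Fin n → ℝ)} {s : Fin n → ℝ}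
    (hc : Pos c) (hz : Pos z) (hzS : z - x₀ ∈ S)
    (hmin : IsMinOn (relEntropy c) (compatibilityClass S x₀) z) (hs : s ∈ S) :
    logRatio z c ⬝ᵥ s = 0 := by
  have hline : HasDerivAt (fun θ : ℝ => z + θ • s) s 0 := by
    simpa using ((hasDerivAt_id (0 : ℝ)).smul_const s).const_add z
  have hder := hline.relEntropy hc (by simpa using hz)
  rw [zero_smul, add_zero] at hder
  refine IsLocalMin.hasDerivAt_eq_zero ?_ hder
  have hpos : ∀ᶠ θ in 𝓝 (0 : ℝ), Pos (z + θ • s) :=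
    (isOpen_setOf_pos.preimage (by fun_prop)).mem_nhds (by simpa using hz)
  filter_upwards [hpos] with θ hθ
  simp only [zero_smul, add_zero]
  refine hmin ⟨fun i => (hθ i).le, ?_⟩
  rw [add_sub_right_comm]
  exact S.add_mem hzS (S.smul_mem θ hs)

/-- Birch's theorem, via a minimizer of `relEntropy c` on the compatibility class. -/
theorem exists_pos_sub_mem_logRatio_orthogonal (S : Submodule ℝ (Fin n → ℝ)) (hc : Pos c)
    (hx₀ : Pos x₀) : ∃ z, Pos z ∧ z - x₀ ∈ S ∧ ∀ s ∈ S, logRatio z c ⬝ᵥ s = 0 := by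
  have hx₀K : x₀ ∈ compatibilityClass S x₀ := ⟨fun i => (hx₀ i).le, by simp⟩
  obtain ⟨z, hzK, hmin⟩ :=
    exists_isMinOn_relEntropy hc (isClosed_compatibilityClass S x₀) (fun x hx => hx.1) hx₀K
  have hz := pos_of_isMinOn_relEntropy hc (convex_compatibilityClass S x₀) (fun x hx => hx.1)
    hx₀K hx₀ hzK hmin
  exact ⟨z, hz, hzK.2, fun s hs => logRatio_dotProduct_eq_zero_of_isMinOn hc hz hzK.2 hmin hs⟩

end Birch

namespace ReactionGraph

variable {n p : ℕ} (G : ReactionGraph n p) {κ : Fin p → ℝ} {x y xs : Fin n → ℝ}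

lemma vecMul_inc_apply (ν : Fin G.m → ℝ) (e : Fin p) :
    (ν ᵥ* G.inc) e = ν (G.tgt e) - ν (G.src e) := by
  simp [vecMul, dotProduct, inc, mul_sub]

lemma stoich_eq_lab_mul_inc : G.stoich = G.lab * G.inc := by
  ext i e
  simp [stoich, lab, inc, mul_apply, mul_sub]

lemma sum_mul_sub_eq_zero_of_inc_mulVec_eq_zero {a : Fin p → ℝ} (hbal : G.inc *ᵥ a = 0)
    (F : Fin G.m → ℝ) : ∑ e, a e * (F (G.tgt e) - F (G.src e)) = 0 := by
  have h := dotProduct_mulVec F G.inc a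
  rw [hbal, dotProduct_zero] at h
  simpa only [dotProduct, vecMul_inc_apply, mul_comm] using h.symm

lemma sum_mul_exp_mul_vecMul_inc_nonpos {a : Fin p → ℝ} (ha : ∀ e, 0 ≤ a e)
    (hbal : G.inc *ᵥ a = 0) (ν : Fin G.m → ℝ) :
    ∑ e, a e * exp (ν (G.src e)) * (ν ᵥ* G.inc) e ≤ 0 := by
  rw [← G.sum_mul_sub_eq_zero_of_inc_mulVec_eq_zero hbal (exp ∘ ν)]
  refine Finset.sum_le_sum fun e _ => ?_
  rw [vecMul_inc_apply, mul_assoc]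
  exact mul_le_mul_of_nonneg_left (exp_mul_sub_le_exp_sub_exp _ _) (ha e)

lemma sum_mul_exp_mul_vecMul_inc_eq_zero_iff {a : Fin p → ℝ} (ha : ∀ e, 0 < a e)
    (hbal : G.inc *ᵥ a = 0) (ν : Fin G.m → ℝ) :
    ∑ e, a e * exp (ν (G.src e)) * (ν ᵥ* G.inc) e = 0 ↔ ν ᵥ* G.inc = 0 := by
  refine ⟨fun h => ?_, fun h => by simp [h]⟩
  by_contra hne
  obtain ⟨e₀, he₀⟩ := Function.ne_iff.1 hne
  rw [vecMul_inc_apply, Pi.zero_apply, sub_ne_zero] at he₀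
  have hlt : ∑ e, a e * exp (ν (G.src e)) * (ν ᵥ* G.inc) e <
      ∑ e, a e * ((exp ∘ ν) (G.tgt e) - (exp ∘ ν) (G.src e)) := by
    refine Finset.sum_lt_sum (fun e _ => ?_) ⟨e₀, Finset.mem_univ _, ?_⟩
    · rw [vecMul_inc_apply, mul_assoc]
      exact mul_le_mul_of_nonneg_left (exp_mul_sub_le_exp_sub_exp _ _) (ha e).le
    · rw [vecMul_inc_apply, mul_assoc]
      exact mul_lt_mul_of_pos_left (exp_mul_sub_lt_exp_sub_exp he₀.symm) (ha e₀)
  rw [G.sum_mul_sub_eq_zero_of_inc_mulVec_eq_zero hbal] at hlt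
  exact hlt.ne h

lemma inc_mulVec_mul_comp_src (a : Fin p → ℝ) {g : Fin G.m → ℝ}
    (hg : ∀ e, g (G.tgt e) = g (G.src e)) :
    G.inc *ᵥ (fun e => a e * g (G.src e)) = fun k => g k * (G.inc *ᵥ a) k := by
  funext k
  simp only [mulVec, dotProduct, inc, Finset.mul_sum]
  refine Finset.sum_congr rfl fun e _ => ?_
  by_cases ht : G.tgt e = k
  · subst ht
    rw [← hg]
    ring
  · by_cases hs : G.src e = k
    · subst hs
      ring
    · simp [ht, hs]

lemma monomial_eq_mul_exp (hx : Pos x) (hxs : Pos xs) (y : Fin n → ℕ) :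
    monomial x y = monomial xs y * exp (∑ i, logRatio x xs i * y i) := by
  rw [monomial, monomial, exp_sum, ← Finset.prod_mul_distrib]
  refine Finset.prod_congr rfl fun i _ => ?_
  rw [logRatio, ← rpow_def_of_pos (div_pos (hx i) (hxs i)), rpow_natCast, div_pow,
    mul_div_cancel₀ _ (pow_pos (hxs i) _).ne']

lemma massAction_eq_mul_exp (hx : Pos x) (hxs : Pos xs) (e : Fin p) :
    G.massAction κ x e =
      G.massAction κ xs e * exp ((logRatio x xs ᵥ* G.lab) (G.src e)) := by
  rw [massAction, massAction, monomial_eq_mul_exp hx hxs, mul_assoc]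
  rfl

lemma massAction_pos (hκ : ∀ e, 0 < κ e) (hx : Pos x) (e : Fin p) : 0 < G.massAction κ x e :=
  mul_pos (hκ e) (Finset.prod_pos fun i _ => pow_pos (hx i) _)

lemma logRatio_dotProduct_rate_eq (hx : Pos x) (hxs : Pos xs) :
    logRatio x xs ⬝ᵥ (G.stoich *ᵥ G.massAction κ x) =
      ∑ e, G.massAction κ xs e * exp ((logRatio x xs ᵥ* G.lab) (G.src e)) *
        ((logRatio x xs ᵥ* G.lab) ᵥ* G.inc) e := by
  rw [dotProduct_mulVec, stoich_eq_lab_mul_inc, ← vecMul_vecMul, dotProduct]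
  exact Finset.sum_congr rfl fun e _ => by rw [G.massAction_eq_mul_exp hx hxs, mul_comm]

lemma logRatio_dotProduct_rate_nonpos (hκ : ∀ e, 0 < κ e) (hx : Pos x) (hxs : Pos xs)
    (hnb : G.inc *ᵥ G.massAction κ xs = 0) :
    logRatio x xs ⬝ᵥ (G.stoich *ᵥ G.massAction κ x) ≤ 0 := by
  rw [G.logRatio_dotProduct_rate_eq hx hxs]
  exact G.sum_mul_exp_mul_vecMul_inc_nonpos (fun e => (G.massAction_pos hκ hxs e).le) hnb _

lemma logRatio_dotProduct_rate_eq_zero_iff (hκ : ∀ e, 0 < κ e) (hx : Pos x) (hxs : Pos xs)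
    (hnb : G.inc *ᵥ G.massAction κ xs = 0) :
    logRatio x xs ⬝ᵥ (G.stoich *ᵥ G.massAction κ x) = 0 ↔ logRatio x xs ᵥ* G.stoich = 0 := by
  rw [G.logRatio_dotProduct_rate_eq hx hxs, stoich_eq_lab_mul_inc, ← vecMul_vecMul]
  exact G.sum_mul_exp_mul_vecMul_inc_eq_zero_iff (G.massAction_pos hκ hxs) hnb _

lemma inc_mulVec_massAction_eq_zero_iff (hκ : ∀ e, 0 < κ e) (hx : Pos x) (hxs : Pos xs)
    (hnb : G.inc *ᵥ G.massAction κ xs = 0) :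
    G.inc *ᵥ G.massAction κ x = 0 ↔ logRatio x xs ᵥ* G.stoich = 0 := by
  constructor
  · intro hxnb
    refine (G.logRatio_dotProduct_rate_eq_zero_iff hκ hx hxs hnb).1 ?_
    rw [stoich_eq_lab_mul_inc, ← mulVec_mulVec, hxnb, mulVec_zero, dotProduct_zero]
  · intro horth
    rw [stoich_eq_lab_mul_inc, ← vecMul_vecMul] at horth
    have hedge e : exp ((logRatio x xs ᵥ* G.lab) (G.tgt e)) =
        exp ((logRatio x xs ᵥ* G.lab) (G.src e)) := by
      rw [← sub_eq_zero.1 ((G.vecMul_inc_apply _ e).symm.trans (congrFun horth e))]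
    have hrate : G.massAction κ x =
        fun e => G.massAction κ xs e * exp ((logRatio x xs ᵥ* G.lab) (G.src e)) :=
      funext (G.massAction_eq_mul_exp hx hxs)
    rw [hrate, G.inc_mulVec_mul_comp_src _ (g := fun k => exp ((logRatio x xs ᵥ* G.lab) k)) hedge,
      hnb]
    simp only [Pi.zero_apply, mul_zero]
    rfl

theorem inc_mulVec_massAction_eq_zero_of_stoich_mulVec_eq_zero (hκ : ∀ e, 0 < κ e)
    (hxs : Pos xs) (hnb : G.inc *ᵥ G.massAction κ xs = 0) (hx : Pos x)
    (hss : G.stoich *ᵥ G.massAction κ x = 0) : G.inc *ᵥ G.massAction κ x = 0 :=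
  (G.inc_mulVec_massAction_eq_zero_iff hκ hx hxs hnb).2 <|
    (G.logRatio_dotProduct_rate_eq_zero_iff hκ hx hxs hnb).1 (by rw [hss, dotProduct_zero])

theorem eq_of_inc_mulVec_massAction_eq_zero (hκ : ∀ e, 0 < κ e) (hxs : Pos xs)
    (hnb : G.inc *ᵥ G.massAction κ xs = 0) (hx : Pos x) (hy : Pos y)
    (hxnb : G.inc *ᵥ G.massAction κ x = 0) (hynb : G.inc *ᵥ G.massAction κ y = 0)
    (hxy : x - y ∈ LinearMap.range G.stoich.mulVecLin) : x = y := by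
  have horth : logRatio x y ᵥ* G.stoich = 0 := by
    rw [← logRatio_sub_logRatio hx hy hxs, sub_vecMul,
      (G.inc_mulVec_massAction_eq_zero_iff hκ hx hxs hnb).1 hxnb,
      (G.inc_mulVec_massAction_eq_zero_iff hκ hy hxs hnb).1 hynb, sub_zero]
  obtain ⟨w, hw⟩ := hxy
  refine eq_of_logRatio_dotProduct_sub_eq_zero hx hy ?_
  rw [← hw, mulVecLin_apply, dotProduct_mulVec, horth, zero_dotProduct]

theorem exists_inc_mulVec_massAction_eq_zero (hκ : ∀ e, 0 < κ e) (hxs : Pos xs)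
    (hnb : G.inc *ᵥ G.massAction κ xs = 0) {x₀ : Fin n → ℝ} (hx₀ : Pos x₀) :
    ∃ z, Pos z ∧ z - x₀ ∈ LinearMap.range G.stoich.mulVecLin ∧
      G.inc *ᵥ G.massAction κ z = 0 := by
  obtain ⟨z, hz, hzS, horth⟩ := exists_pos_sub_mem_logRatio_orthogonal _ hxs hx₀
  refine ⟨z, hz, hzS, (G.inc_mulVec_massAction_eq_zero_iff hκ hz hxs hnb).2 ?_⟩
  refine dotProduct_eq_zero_iff.1 fun w => ?_
  rw [← dotProduct_mulVec]
  exact horth _ ⟨w, rfl⟩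

end ReactionGraph

lemma sub_mem_of_hasDerivAt_mem {E : Type*} [NormedAddCommGroup E] [NormedSpace ℝ E]
    [FiniteDimensional ℝ E] {S : Submodule ℝ E} {f f' : ℝ → E}
    (hf : ∀ t, 0 ≤ t → HasDerivAt f (f' t) t) (hS : ∀ t, 0 ≤ t → f' t ∈ S) {t : ℝ}
    (ht : 0 ≤ t) : f t - f 0 ∈ S := by
  by_contra hnot
  obtain ⟨φ, hφ, hSφ⟩ := Submodule.exists_le_ker_of_notMem hnot
  set φ' := LinearMap.toContinuousLinearMap φ
  have hconst := constant_of_has_deriv_right_zero (f := φ' ∘ f) (a := 0) (b := t)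
    (fun s hs => (φ'.continuous.continuousAt.comp (hf s hs.1).continuousAt).continuousWithinAt)
    (fun s hs => by
      have h := φ'.hasFDerivAt.comp_hasDerivAt s (hf s hs.1)
      rw [show φ' (f' s) = 0 from hSφ (hS s hs.1)] at h
      exact h.hasDerivWithinAt)
    t ⟨ht, le_rfl⟩
  exact hφ (by simpa [φ', sub_eq_zero] using hconst)

lemma forall_dist_lt_of_le_on_sphere {E : Type*} [PseudoMetricSpace E] {V : E → ℝ}
    {f : ℝ → E} {xs : E} {r m : ℝ} (hf : ContinuousOn f (Ici 0))
    (hV : ∀ x ∈ sphere xs r, m ≤ V x) (h0 : dist (f 0) xs < r) (hV0 : V (f 0) < m)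
    (hdecr : ∀ T, 0 ≤ T → (∀ s ∈ Icc 0 T, dist (f s) xs ≤ r) → V (f T) ≤ V (f 0)) :
    ∀ t, 0 ≤ t → dist (f t) xs < r := by
  intro t ht
  by_contra! hrt
  set g := fun s => dist (f s) xs
  have hg : ContinuousOn g (Icc 0 t) := (continuous_id.dist continuous_const).comp_continuousOn
    (hf.mono Icc_subset_Ici_self)
  have hivt : ∀ s ∈ Icc 0 t, r ≤ g s → ∃ s' ∈ Icc 0 s, g s' = r := fun s hs hrs =>
    intermediate_value_Icc hs.1 (hg.mono (Icc_subset_Icc_right hs.2)) ⟨h0.le, hrs⟩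
  set A := Icc 0 t ∩ g ⁻¹' {r}
  have hA : IsClosed A := hg.preimage_isClosed_of_isClosed isClosed_Icc isClosed_singleton
  have hAne : A.Nonempty := by
    obtain ⟨s, hs, hgs⟩ := hivt t ⟨ht, le_rfl⟩ hrt
    exact ⟨s, ⟨hs.1, hs.2⟩, hgs⟩
  have hAbdd : BddBelow A := ⟨0, fun s hs => hs.1.1⟩
  obtain ⟨⟨hT0, hTt⟩, hgT⟩ := hA.csInf_mem hAne hAbdd
  have hin : ∀ s ∈ Icc 0 (sInf A), g s ≤ r := by
    intro s hs
    by_contra! hgs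
    obtain ⟨s', hs', hgs'⟩ := hivt s ⟨hs.1, hs.2.trans hTt⟩ hgs.le
    have hTs' : sInf A ≤ s' := csInf_le hAbdd ⟨⟨hs'.1, hs'.2.trans (hs.2.trans hTt)⟩, hgs'⟩
    have hsT : s = sInf A := le_antisymm hs.2 (hTs'.trans hs'.2)
    rw [hsT, hgT] at hgs
    exact lt_irrefl r hgs
  linarith [hdecr _ hT0 hin, hV _ (mem_sphere.2 hgT)]

lemma antitoneOn_relEntropy_comp_sub_mul {n : ℕ} {c : Fin n → ℝ} {f f' : ℝ → Fin n → ℝ}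
    {I : Set ℝ} {b : ℝ} (hI : Convex ℝ I) (hf : ∀ t ∈ I, HasDerivAt f (f' t) t) (hc : Pos c)
    (hpos : ∀ t ∈ I, Pos (f t)) (hb : ∀ t ∈ I, logRatio (f t) c ⬝ᵥ f' t ≤ b) :
    AntitoneOn (fun t => relEntropy c (f t) - b * t) I := by
  have hd : ∀ t ∈ I, HasDerivAt (fun t => relEntropy c (f t) - b * t)
      (logRatio (f t) c ⬝ᵥ f' t - b) t := fun t ht => by
    simpa using ((hf t ht).relEntropy hc (hpos t ht)).fun_sub ((hasDerivAt_id' t).const_mul b)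
  refine antitoneOn_of_deriv_nonpos hI (fun t ht => (hd t ht).continuousAt.continuousWithinAt)
    (fun t ht => (hd t (interior_subset ht)).differentiableAt.differentiableWithinAt)
    fun t ht => ?_
  rw [(hd t (interior_subset ht)).deriv]
  linarith [hb t (interior_subset ht)]

lemma exists_closedBall_subset_pos {n : ℕ} {xs : Fin n → ℝ} (hxs : Pos xs) {ε : ℝ}
    (hε : 0 < ε) : ∃ r, 0 < r ∧ r ≤ ε ∧ closedBall xs r ⊆ {x | Pos x} := by
  obtain ⟨r, hr, hball⟩ := Metric.nhds_basis_closedBall.mem_iff.1 (isOpen_setOf_pos.mem_nhds hxs)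
  exact ⟨min r ε, lt_min hr hε, min_le_right _ _,
    (closedBall_subset_closedBall (min_le_left _ _)).trans hball⟩

namespace ReactionGraph

variable {n p : ℕ}

def IsSolution (G : ReactionGraph n p) (κ : Fin p → ℝ) (f : ℝ → Fin n → ℝ) : Prop :=
  ∀ t, 0 ≤ t → HasDerivAt f (G.stoich *ᵥ G.massAction κ (f t)) t

variable {G : ReactionGraph n p} {κ : Fin p → ℝ} {xs : Fin n → ℝ} {f : ℝ → Fin n → ℝ}

lemma IsSolution.comp_add_const (hf : G.IsSolution κ f) {t₀ : ℝ} (ht₀ : 0 ≤ t₀) :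
    G.IsSolution κ (fun t => f (t + t₀)) :=
  fun t ht => (hf (t + t₀) (add_nonneg ht ht₀)).comp_add_const t t₀

lemma IsSolution.sub_mem_range (hf : G.IsSolution κ f) {t : ℝ} (ht : 0 ≤ t) :
    f t - f 0 ∈ LinearMap.range G.stoich.mulVecLin :=
  sub_mem_of_hasDerivAt_mem hf (fun _ _ => LinearMap.mem_range_self _ _) ht

lemma IsSolution.relEntropy_le (hf : G.IsSolution κ f) (hκ : ∀ e, 0 < κ e) (hxs : Pos xs)
    (hnb : G.inc *ᵥ G.massAction κ xs = 0) {T : ℝ} (hT : 0 ≤ T)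
    (hpos : ∀ s ∈ Icc 0 T, Pos (f s)) : relEntropy xs (f T) ≤ relEntropy xs (f 0) := by
  have h := antitoneOn_relEntropy_comp_sub_mul (b := 0) (convex_Icc 0 T)
    (fun s hs => hf s hs.1) hxs hpos
    fun s hs => G.logRatio_dotProduct_rate_nonpos hκ (hpos s hs) hxs hnb
  simpa using h ⟨le_rfl, hT⟩ ⟨hT, le_rfl⟩ hT

variable (G)

lemma continuousOn_logRatio_dotProduct_rate (hxs : Pos xs) :
    ContinuousOn (fun x => logRatio x xs ⬝ᵥ (G.stoich *ᵥ G.massAction κ x)) {x | Pos x} := by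
  have hv : Continuous fun x => G.stoich *ᵥ G.massAction κ x := by
    unfold massAction monomial
    fun_prop
  refine continuousOn_finsetSum _ fun i _ =>
    ContinuousOn.mul ?_ ((continuous_apply i).comp hv).continuousOn
  exact ((continuous_apply i).div_const _).continuousOn.log fun x hx =>
    (div_pos (hx i) (hxs i)).ne'

theorem exists_forall_dist_lt_of_isSolution (hκ : ∀ e, 0 < κ e) (hxs : Pos xs)
    (hnb : G.inc *ᵥ G.massAction κ xs = 0) {ε : ℝ} (hε : 0 < ε) :
    ∃ δ, 0 < δ ∧ ∀ f, G.IsSolution κ f → dist (f 0) xs < δ → ∀ t, 0 ≤ t → dist (f t) xs < ε := by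
  obtain ⟨r, hr, hrε, hball⟩ := exists_closedBall_subset_pos hxs hε
  obtain ⟨m, hm, hmV⟩ := (isCompact_sphere xs r).exists_forall_le'
    (continuous_relEntropy xs).continuousOn (a := 0) fun x hx =>
      relEntropy_pos hxs (fun i => (hball (sphere_subset_closedBall hx) i).le)
        (ne_of_mem_sphere hx hr.ne')
  obtain ⟨δ, hδ, hδV⟩ := Metric.isOpen_iff.1
    (isOpen_lt (continuous_relEntropy xs) continuous_const) xs
    (show relEntropy xs xs < m by rwa [relEntropy_self])
  refine ⟨min δ r, lt_min hδ hr, fun f hf h0 t ht => lt_of_lt_of_le ?_ hrε⟩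
  refine forall_dist_lt_of_le_on_sphere (fun s hs => (hf s hs).continuousAt.continuousWithinAt)
    hmV (h0.trans_le (min_le_right _ _)) (hδV (mem_ball.2 (h0.trans_le (min_le_left _ _))))
    (fun T hT hin => hf.relEntropy_le hκ hxs hnb hT fun s hs => hball (hin s hs)) t ht

/-- LaSalle's argument: away from `xs`, the compact part of the compatibility class in the
ball carries no node balanced state, so `relEntropy xs` decreases at a uniform rate there. -/
lemma exists_dist_lt_of_isSolution (hκ : ∀ e, 0 < κ e) (hxs : Pos xs)
    (hnb : G.inc *ᵥ G.massAction κ xs = 0) {r : ℝ} (hball : closedBall xs r ⊆ {x | Pos x})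
    (hf : G.IsSolution κ f) (hfr : ∀ t, 0 ≤ t → dist (f t) xs ≤ r)
    (hfS : ∀ t, 0 ≤ t → f t - xs ∈ LinearMap.range G.stoich.mulVecLin) {ρ : ℝ} (hρ : 0 < ρ) :
    ∃ t, 0 ≤ t ∧ dist (f t) xs < ρ := by
  by_contra! hfar
  set S := LinearMap.range G.stoich.mulVecLin
  set D := closedBall xs r ∩ {x | ρ ≤ dist x xs ∧ x - xs ∈ S}
  have hD : IsCompact D := (isCompact_closedBall xs r).inter_right <|
    (isClosed_le continuous_const (continuous_id.dist continuous_const)).inter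
      ((Submodule.closed_of_finiteDimensional S).preimage (continuous_id.sub continuous_const))
  have hneg : ∀ x ∈ D, 0 < -(logRatio x xs ⬝ᵥ (G.stoich *ᵥ G.massAction κ x)) := by
    rintro x ⟨hxr, hxρ, hxS⟩
    refine neg_pos.2 (lt_of_le_of_ne (G.logRatio_dotProduct_rate_nonpos hκ (hball hxr) hxs hnb)
      fun hW => ?_)
    have hxnb := (G.inc_mulVec_massAction_eq_zero_iff hκ (hball hxr) hxs hnb).2
      ((G.logRatio_dotProduct_rate_eq_zero_iff hκ (hball hxr) hxs hnb).1 hW)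
    have hxxs := G.eq_of_inc_mulVec_massAction_eq_zero hκ hxs hnb (hball hxr) hxs hxnb hnb hxS
    rw [hxxs, dist_self] at hxρ
    linarith
  obtain ⟨a, ha, haW⟩ := hD.exists_forall_le'
    ((G.continuousOn_logRatio_dotProduct_rate hxs).mono fun x hx => hball hx.1).neg hneg
  have hanti := antitoneOn_relEntropy_comp_sub_mul (b := -a) (convex_Ici 0)
    (fun t ht => hf t ht) hxs (fun t ht => hball (hfr t ht))
    fun t ht => by
      have h := haW (f t) ⟨hfr t ht, hfar t ht, hfS t ht⟩
      rw [Pi.neg_apply] at h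
      linarith
  set t := (relEntropy xs (f 0) + 1) / a
  have ht : 0 ≤ t := div_nonneg
    (by linarith [relEntropy_nonneg hxs fun i => (hball (hfr 0 le_rfl) i).le]) ha.le
  have hdecr := hanti (mem_Ici.2 le_rfl) ht ht
  have hat : a * t = relEntropy xs (f 0) + 1 := mul_div_cancel₀ _ ha.ne'
  simp only at hdecr
  linarith [relEntropy_nonneg hxs fun i => (hball (hfr t ht) i).le]

theorem exists_tendsto_of_isSolution (hκ : ∀ e, 0 < κ e) (hxs : Pos xs)
    (hnb : G.inc *ᵥ G.massAction κ xs = 0) :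
    ∃ δ, 0 < δ ∧ ∀ f, G.IsSolution κ f → f 0 - xs ∈ LinearMap.range G.stoich.mulVecLin →
      dist (f 0) xs < δ → Tendsto f atTop (𝓝 xs) := by
  obtain ⟨r, hr, -, hball⟩ := exists_closedBall_subset_pos hxs one_pos
  obtain ⟨δ, hδ, hstay⟩ := G.exists_forall_dist_lt_of_isSolution hκ hxs hnb hr
  refine ⟨δ, hδ, fun f hf hf0 h0 => Metric.tendsto_atTop.2 fun ε hε => ?_⟩
  obtain ⟨δ', hδ', hstay'⟩ := G.exists_forall_dist_lt_of_isSolution hκ hxs hnb hε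
  obtain ⟨t₀, ht₀, hclose⟩ := G.exists_dist_lt_of_isSolution hκ hxs hnb hball hf
    (fun t ht => (hstay f hf h0 t ht).le)
    (fun t ht => by simpa using add_mem (hf.sub_mem_range ht) hf0) hδ'
  refine ⟨t₀, fun t ht => ?_⟩
  simpa using hstay' _ (hf.comp_add_const ht₀) (by simpa using hclose) (t - t₀) (by linarith)

end ReactionGraph

open ReactionGraph in
theorem node_balanced_unique_stable_general {n p : ℕ} (G : ReactionGraph n p)
    (κ : Fin p → ℝ) (hκ : ∀ e, 0 < κ e)
    (hex : ∃ x : Fin n → ℝ, Pos x ∧ G.inc.mulVec (G.massAction κ x) = 0) :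
    -- (a) every positive steady state is node balanced
    (∀ x : Fin n → ℝ, Pos x → G.stoich.mulVec (G.massAction κ x) = 0 →
      G.inc.mulVec (G.massAction κ x) = 0) ∧
    -- (b) exactly one positive (node balanced) steady state in each compatibility class
    (∀ x₀ : Fin n → ℝ, Pos x₀ →
      ∃! x : Fin n → ℝ, Pos x ∧ (x - x₀) ∈ LinearMap.range G.stoich.mulVecLin ∧
        G.inc.mulVec (G.massAction κ x) = 0) ∧
    -- (c) local asymptotic stability relative to the class
    (∀ xs : Fin n → ℝ, Pos xs → G.inc.mulVec (G.massAction κ xs) = 0 →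
      -- Lyapunov stability
      ((∀ ε : ℝ, 0 < ε → ∃ δ : ℝ, 0 < δ ∧
        ∀ f : ℝ → (Fin n → ℝ),
          (∀ t : ℝ, 0 ≤ t → HasDerivAt f (G.stoich.mulVec (G.massAction κ (f t))) t) →
          (f 0 - xs) ∈ LinearMap.range G.stoich.mulVecLin →
          Pos (f 0) → dist (f 0) xs < δ →
          ∀ t : ℝ, 0 ≤ t → dist (f t) xs < ε) ∧
      -- local attractivity within the class
      (∃ δ : ℝ, 0 < δ ∧
        ∀ f : ℝ → (Fin n → ℝ),
          (∀ t : ℝ, 0 ≤ t → HasDerivAt f (G.stoich.mulVec (G.massAction κ (f t))) t) →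
          (f 0 - xs) ∈ LinearMap.range G.stoich.mulVecLin →
          Pos (f 0) → dist (f 0) xs < δ →
          Filter.Tendsto f Filter.atTop (nhds xs)))) := by
  obtain ⟨c, hc, hcnb⟩ := hex
  refine ⟨fun x hx => G.inc_mulVec_massAction_eq_zero_of_stoich_mulVec_eq_zero hκ hc hcnb hx,
    fun x₀ hx₀ => ?_, fun xs hxs hnb => ⟨fun ε hε => ?_, ?_⟩⟩
  · obtain ⟨z, hz, hzS, hznb⟩ := G.exists_inc_mulVec_massAction_eq_zero hκ hc hcnb hx₀
    refine ⟨z, ⟨hz, hzS, hznb⟩, fun y ⟨hy, hyS, hynb⟩ =>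
      G.eq_of_inc_mulVec_massAction_eq_zero hκ hc hcnb hy hz hynb hznb ?_⟩
    simpa using sub_mem hyS hzS
  · obtain ⟨δ, hδ, hstay⟩ := G.exists_forall_dist_lt_of_isSolution hκ hxs hnb hε
    exact ⟨δ, hδ, fun f hf _ _ => hstay f hf⟩
  · obtain ⟨δ, hδ, hconv⟩ := G.exists_tendsto_of_isSolution hκ hxs hnb
    exact ⟨δ, hδ, fun f hf hf0 _ => hconv f hf hf0⟩

open ReactionGraph in
/-- uniqueness and asymptotic stability: if a mass-action system admits one
positive node balanced steady state w.r.t. a weakly reversible reaction graph `G`, then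
(a) every positive steady state is node balanced w.r.t. `G`; (b) each stoichiometric
compatibility class (of a positive point) contains exactly one positive node balanced
steady state; and (c) every positive node balanced steady state is locally asymptotically
stable relative to its stoichiometric compatibility class. -/
theorem node_balanced_unique_stable {n p : ℕ} (G : ReactionGraph n p)
    (hwr : G.WeaklyReversible) (κ : Fin p → ℝ) (hκ : ∀ e, 0 < κ e)
    (hex : ∃ x : Fin n → ℝ, Pos x ∧ G.inc.mulVec (G.massAction κ x) = 0) :
    -- (a) every positive steady state is node balanced
    (∀ x : Fin n → ℝ, Pos x → G.stoich.mulVec (G.massAction κ x) = 0 →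
      G.inc.mulVec (G.massAction κ x) = 0) ∧
    -- (b) exactly one positive (node balanced) steady state in each compatibility class
    (∀ x₀ : Fin n → ℝ, Pos x₀ →
      ∃! x : Fin n → ℝ, Pos x ∧ (x - x₀) ∈ LinearMap.range G.stoich.mulVecLin ∧
        G.inc.mulVec (G.massAction κ x) = 0) ∧
    -- (c) local asymptotic stability relative to the class
    (∀ xs : Fin n → ℝ, Pos xs → G.inc.mulVec (G.massAction κ xs) = 0 →
      -- Lyapunov stability
      ((∀ ε : ℝ, 0 < ε → ∃ δ : ℝ, 0 < δ ∧
        ∀ f : ℝ → (Fin n → ℝ),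
          (∀ t : ℝ, 0 ≤ t → HasDerivAt f (G.stoich.mulVec (G.massAction κ (f t))) t) →
          (f 0 - xs) ∈ LinearMap.range G.stoich.mulVecLin →
          Pos (f 0) → dist (f 0) xs < δ →
          ∀ t : ℝ, 0 ≤ t → dist (f t) xs < ε) ∧
      -- local attractivity within the class
      (∃ δ : ℝ, 0 < δ ∧
        ∀ f : ℝ → (Fin n → ℝ),
          (∀ t : ℝ, 0 ≤ t → HasDerivAt f (G.stoich.mulVec (G.massAction κ (f t))) t) →
          (f 0 - xs) ∈ LinearMap.range G.stoich.mulVecLin →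
          Pos (f 0) → dist (f 0) xs < δ →
          Filter.Tendsto f Filter.atTop (nhds xs)))) :=
  node_balanced_unique_stable_general G κ hκ hex
end

section
/- In the auxiliary network construction, ker π = span{e_{i,1→j} : i ∈ [n], j ∈ [m_G]} and has dimension n(m_G−1), the stoichiometric subspace S' of the auxiliary network N' satisfies π(S') = S, dim S' = s + n(m_G − 1), and the deficiency of N' equals δ_G. -/
/-!
The projection `π` is onto `ℝⁿ` (when `m_G > 0`) and its kernel is spanned by the vectors
`e_{i,j₀→j}`, so it has dimension `n m_G - n`. The `ε`-reactions of `N'` contribute exactly these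
vectors, so `ker π ≤ S'`, while `π` sends the reaction vector `y^{j'} - y^j` of `N'` to the
reaction vector `Y_{j'} - Y_j` of `N`; hence `π(S') = S` and rank–nullity on `S'` gives
`dim S' = s + n(m_G - 1)`. With `m_G(n+1)` complexes in `ℓ_G + n` linkage classes the
deficiency of `N'` is therefore `m_G - ℓ_G - s`.
-/

open scoped Classical

namespace AuxNetwork

open ReactionGraph

variable {n p : ℕ}

/-- The projection `π : ℝ^{n×m_G} → ℝ^n`, `π(x)_i = Σ_j x_{ij}`. -/
noncomputable def piMat (n m : ℕ) : Matrix (Fin n) (Fin n × Fin m) ℝ :=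
  fun i q => if q.1 = i then 1 else 0

/-- The vector `e_{i,j→j'}` with `-1` in entry `(i,j)` and `+1` in entry `(i,j')`. -/
noncomputable def evec {n m : ℕ} (i : Fin n) (j j' : Fin m) : Fin n × Fin m → ℝ :=
  fun q => (if q = (i, j') then (1 : ℝ) else 0) - (if q = (i, j) then (1 : ℝ) else 0)

/-- The complex `y^j = Σ_i (Y_j)_i (X_i, j)` of the auxiliary network, as a vector. -/
noncomputable def yvec (G : ReactionGraph n p) (j : Fin G.m) : Fin n × Fin G.m → ℝ :=
  fun q => if q.2 = j then (G.Y j q.1 : ℝ) else 0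

/-- Stoichiometric subspace `S'` of the auxiliary network `N'`: spanned by the reaction
vectors `y^{tgt e} - y^{src e}` and the vectors of the reactions
`ε(X_i,j) → ε(X_i,j')` (which span the same space as the `e_{i,j→j'}`). -/
noncomputable def S' (G : ReactionGraph n p) : Submodule ℝ (Fin n × Fin G.m → ℝ) :=
  Submodule.span ℝ
    ({v | ∃ e : Fin p, v = yvec G (G.tgt e) - yvec G (G.src e)} ∪
      {v | ∃ (i : Fin n) (j j' : Fin G.m), j ≠ j' ∧ v = evec i j j'})

end AuxNetwork

theorem Submodule.finrank_map_add_finrank_ker_of_ker_le {K V W : Type*} [DivisionRing K]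
    [AddCommGroup V] [Module K V] [AddCommGroup W] [Module K W] [FiniteDimensional K V]
    (f : V →ₗ[K] W) {U : Submodule K V} (h : LinearMap.ker f ≤ U) :
    Module.finrank K (U.map f) + Module.finrank K (LinearMap.ker f) = Module.finrank K U := by
  have key := LinearMap.finrank_range_add_finrank_ker (f.comp U.subtype)
  rwa [LinearMap.range_comp, Submodule.range_subtype, LinearMap.ker_comp,
    (Submodule.comapSubtypeEquivOfLe h).finrank_eq] at key

namespace AuxNetwork

open ReactionGraph Matrix

variable {n p m : ℕ}

theorem piMat_mulVec_apply (v : Fin n × Fin m → ℝ) (i : Fin n) :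
    (piMat n m *ᵥ v) i = ∑ j, v (i, j) := by
  simp only [piMat, mulVec, dotProduct, Fintype.sum_prod_type, ite_mul, one_mul, zero_mul]
  rw [Finset.sum_eq_single i (fun b _ hb => by simp [hb]) (by simp)]
  simp

theorem piMat_mulVec_evec (i : Fin n) (j j' : Fin m) : piMat n m *ᵥ evec i j j' = 0 := by
  funext i'
  rw [piMat_mulVec_apply]
  simp [evec, Finset.sum_sub_distrib, Prod.ext_iff, ite_and]

theorem evec_self (i : Fin n) (j : Fin m) : evec i j j = 0 :=
  funext fun _ => sub_self _

/-- At `(i, j₀)` the sum reads `x_{ij₀} - Σ_j x_{ij}`, and the row sum vanishes. -/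
theorem eq_sum_smul_evec_of_piMat_mulVec_eq_zero {x : Fin n × Fin m → ℝ}
    (hx : piMat n m *ᵥ x = 0) (j₀ : Fin m) :
    x = ∑ q : Fin n × Fin m, x q • evec q.1 j₀ q.2 := by
  have hrow (i : Fin n) : ∑ j, x (i, j) = 0 := by
    rw [← piMat_mulVec_apply, hx, Pi.zero_apply]
  funext ⟨i, j⟩
  simp only [Finset.sum_apply, Pi.smul_apply, smul_eq_mul, evec, mul_sub,
    Finset.sum_sub_distrib, Fintype.sum_prod_type, Prod.ext_iff, mul_ite, mul_one, mul_zero,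
    ite_and]
  rw [Finset.sum_eq_single i (fun b _ hb => by simp [Ne.symm hb]) (by simp)]
  by_cases hj : j = j₀ <;> simp [hj, hrow]

theorem ker_piMat_mulVecLin (j₀ : Fin m) :
    LinearMap.ker (piMat n m).mulVecLin =
      Submodule.span ℝ {v | ∃ (i : Fin n) (j : Fin m), v = evec i j₀ j} := by
  apply le_antisymm
  · intro x hx
    rw [eq_sum_smul_evec_of_piMat_mulVec_eq_zero (LinearMap.mem_ker.mp hx) j₀]
    exact Submodule.sum_mem _ fun q _ =>
      Submodule.smul_mem _ _ (Submodule.subset_span ⟨q.1, q.2, rfl⟩)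
  · rw [Submodule.span_le]
    rintro v ⟨i, j, rfl⟩
    exact piMat_mulVec_evec i j₀ j

theorem range_piMat_mulVecLin (hm : 0 < m) : LinearMap.range (piMat n m).mulVecLin = ⊤ := by
  refine LinearMap.range_eq_top.mpr fun x => ⟨fun q => if q.2 = ⟨0, hm⟩ then x q.1 else 0, ?_⟩
  funext i
  simp [piMat_mulVec_apply]

theorem finrank_ker_piMat_mulVecLin :
    Module.finrank ℝ (LinearMap.ker (piMat n m).mulVecLin) = n * (m - 1) := by
  rcases Nat.eq_zero_or_pos m with rfl | hm
  · simp only [Nat.zero_sub, mul_zero]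
    exact Module.finrank_zero_of_subsingleton
  have key := LinearMap.finrank_range_add_finrank_ker (piMat n m).mulVecLin
  rw [range_piMat_mulVecLin hm, finrank_top, Module.finrank_fintype_fun_eq_card,
    Module.finrank_fintype_fun_eq_card, Fintype.card_prod, Fintype.card_fin,
    Fintype.card_fin] at key
  rw [Nat.mul_sub_one]
  omega

theorem piMat_mulVec_yvec_sub_yvec (G : ReactionGraph n p) (e : Fin p) :
    piMat n G.m *ᵥ (yvec G (G.tgt e) - yvec G (G.src e)) = G.stoichᵀ e := by
  funext i
  simp [piMat_mulVec_apply, yvec, stoich]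

theorem map_piMat_mulVecLin_S' (G : ReactionGraph n p) :
    (S' G).map (piMat n G.m).mulVecLin = LinearMap.range G.stoich.mulVecLin := by
  rw [S', Submodule.map_span, Matrix.range_mulVecLin]
  apply le_antisymm
  · rw [Submodule.span_le]
    rintro - ⟨w, ⟨e, rfl⟩ | ⟨i, j, j', -, rfl⟩, rfl⟩
    · exact Submodule.subset_span ⟨e, (piMat_mulVec_yvec_sub_yvec G e).symm⟩
    · simp [piMat_mulVec_evec]
  · rw [Submodule.span_le]
    rintro - ⟨e, rfl⟩
    exact Submodule.subset_span ⟨_, Or.inl ⟨e, rfl⟩, piMat_mulVec_yvec_sub_yvec G e⟩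

theorem ker_piMat_mulVecLin_le_S' (G : ReactionGraph n p) (hm : 0 < G.m) :
    LinearMap.ker (piMat n G.m).mulVecLin ≤ S' G := by
  rw [ker_piMat_mulVecLin ⟨0, hm⟩, Submodule.span_le]
  rintro - ⟨i, j, rfl⟩
  by_cases hj : ⟨0, hm⟩ = j
  · simp [← hj, evec_self]
  · exact Submodule.subset_span (Or.inr ⟨i, ⟨0, hm⟩, j, hj, rfl⟩)

theorem finrank_S' (G : ReactionGraph n p) (hm : 0 < G.m) :
    Module.finrank ℝ (S' G) = G.stoich.rank + n * (G.m - 1) := by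
  rw [← Submodule.finrank_map_add_finrank_ker_of_ker_le _ (ker_piMat_mulVecLin_le_S' G hm),
    map_piMat_mulVecLin_S', finrank_ker_piMat_mulVecLin, Matrix.rank]

end AuxNetwork

open ReactionGraph AuxNetwork in
/-- for the auxiliary network `N'`:
`ker π = span{e_{i,1→j}}` of dimension `n(m_G - 1)`; `π(S') = S`;
`dim S' = s + n(m_G - 1)`; and the deficiency of `N'`
(`m_G(n+1)` complexes, `ℓ_G + n` linkage classes) equals `δ_G`. -/
theorem aux_network_deficiency {n p : ℕ} (G : ReactionGraph n p) (hm : 0 < G.m) :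
    LinearMap.ker (piMat n G.m).mulVecLin =
        Submodule.span ℝ {v | ∃ (i : Fin n) (j : Fin G.m), v = evec i (⟨0, hm⟩ : Fin G.m) j} ∧
      Module.finrank ℝ (LinearMap.ker (piMat n G.m).mulVecLin) = n * (G.m - 1) ∧
      Submodule.map (piMat n G.m).mulVecLin (S' G) = LinearMap.range G.stoich.mulVecLin ∧
      Module.finrank ℝ (S' G) =
        Module.finrank ℝ (LinearMap.range G.stoich.mulVecLin) + n * (G.m - 1) ∧
      ((G.m * (n + 1) : ℤ) - (G.numComponents + n) - Module.finrank ℝ (S' G)) =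
        G.deficiency := by
  refine ⟨ker_piMat_mulVecLin _, finrank_ker_piMat_mulVecLin, map_piMat_mulVecLin_S' G,
    finrank_S' G hm, ?_⟩
  rw [finrank_S' G hm, deficiency, Nat.cast_add, Nat.cast_mul, Nat.cast_pred hm]
  ring
end
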